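/- arXiv:0707.0257 — 6 statements merged into one kernel-verified Lean document; each statement's English description precedes it below -/
import Mathlib

section
/- Let (Ω, 𝒜, P) be a probability space, and for each n ∈ ℕ let L_n ∈ ℕ, let 𝓕^n_0 ⊆ 𝓕^n_1 ⊆ … ⊆ 𝓕^n_{L_n+1} ⊆ 𝒜 be sigma-algebras, and let (χ^n_l)_{0≤l≤L_n} be square-integrable real random variables such that χ^n_l is 𝓕^n_{l+1}-measurable. Let U be a real random variable. If ∑_{l=0}^{L_n} E[χ^n_l | 𝓕^n_l] converges to U in probability and ∑_{l=0}^{L_n} E[(χ^n_l)² | 𝓕^n_l] converges to 0 in probability as n → ∞, then ∑_{l=0}^{L_n} χ^n_l converges to U in probability. -/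
/-!
Write `χ_l = d_l + c_l` with `c_l = E[χ_l | 𝓕_l]`; since `∑ c_l → U`, it suffices that `∑ d_l → 0`.
The `d_l` are martingale increments with `E[d_l² | 𝓕_l] ≤ g_l := E[χ_l² | 𝓕_l]`. Keeping only the
increments of index `l` with `g_0 + ⋯ + g_l ≤ ε`, an `𝓕_l`-measurable event, gives orthogonal
increments of total second moment at most `ε`. On `{∑ g_l ≤ ε}` nothing has been discarded, so
Chebyshev yields `P(|∑ d_l| ≥ η) ≤ ε / η² + P(∑ g_l ≥ ε)`; let `n → ∞`, then `ε → 0`.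
-/

open MeasureTheory Filter ProbabilityTheory

theorem Finset.sum_range_ite_sum_range_le {a : ℕ → ℝ} (ha : ∀ l, 0 ≤ a l) {ε : ℝ} (hε : 0 ≤ ε)
    (N : ℕ) :
    ∑ l ∈ range N, (if ∑ k ∈ range (l + 1), a k ≤ ε then a l else 0) ≤ ε := by
  suffices h : ∀ N, ∑ l ∈ range N, (if ∑ k ∈ range (l + 1), a k ≤ ε then a l else 0)
      ≤ min ε (∑ l ∈ range N, a l) from (h N).trans (min_le_left _ _)
  intro N
  induction N with
  | zero => simp [hε]
  | succ N ih =>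
    rw [sum_range_succ]
    split_ifs with hN
    · have := ih.trans (min_le_right _ _)
      rw [sum_range_succ] at hN ⊢
      exact le_min (by linarith) (by linarith)
    · rw [add_zero]
      exact ih.trans (min_le_min_left _ (sum_le_sum_of_subset_of_nonneg
        (range_subset_range.2 N.le_succ) fun l _ _ => ha l))

namespace MeasureTheory

theorem TendstoInMeasure.add {Ω ι E : Type*} [MeasurableSpace Ω] {μ : Measure Ω}
    [SeminormedAddCommGroup E] {l : Filter ι} {f g : ι → Ω → E} {a b : Ω → E}
    (hf : TendstoInMeasure μ f l a) (hg : TendstoInMeasure μ g l b) :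
    TendstoInMeasure μ (fun i ω => f i ω + g i ω) l (fun ω => a ω + b ω) := by
  rw [tendstoInMeasure_iff_norm] at hf hg ⊢
  intro δ hδ
  have hsum := (hf (δ / 2) (half_pos hδ)).add (hg (δ / 2) (half_pos hδ))
  rw [add_zero] at hsum
  refine tendsto_of_tendsto_of_tendsto_of_le_of_le tendsto_const_nhds hsum (fun _ => zero_le)
    fun i => (measure_mono fun ω hω => ?_).trans (measure_union_le _ _)
  by_contra! h
  simp only [Set.mem_union, Set.mem_ofPred_eq, not_or, not_le] at h hω
  have := norm_add_le (f i ω - a ω) (g i ω - b ω)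
  rw [add_sub_add_comm] at hω
  linarith

theorem tendstoInMeasure_zero_of_measureReal_le {Ω ι : Type*} [MeasurableSpace Ω]
    {μ : Measure Ω} [IsFiniteMeasure μ] {l : Filter ι} {D G : ι → Ω → ℝ}
    (hG : TendstoInMeasure μ G l 0)
    (hDG : ∀ i, ∀ η > 0, ∀ ε > 0,
      μ.real {ω | η ≤ |D i ω|} ≤ ε / η ^ 2 + μ.real {ω | ε ≤ |G i ω|}) :
    TendstoInMeasure μ D l 0 := by
  rw [tendstoInMeasure_iff_measureReal_norm] at hG ⊢
  simp only [Pi.zero_apply, sub_zero, Real.norm_eq_abs] at hG ⊢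
  intro η hη
  refine tendsto_order.2 ⟨fun r hr => Eventually.of_forall fun i => hr.trans_le measureReal_nonneg,
    fun r hr => ?_⟩
  have hε : 0 < r / 2 * η ^ 2 := by positivity
  filter_upwards [(tendsto_order.1 (hG _ hε)).2 (r / 2) (half_pos hr)] with i hi
  calc μ.real {ω | η ≤ |D i ω|} ≤ r / 2 * η ^ 2 / η ^ 2 + μ.real {ω | r / 2 * η ^ 2 ≤ |G i ω|} :=
        hDG i η hη _ hε
    _ < r / 2 + r / 2 := by rw [mul_div_cancel_right₀ _ (by positivity)]; linarith
    _ = r := add_halves r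

theorem measureReal_ge_le_integral_sq_div_sq {Ω : Type*} [MeasurableSpace Ω]
    {μ : Measure Ω} {Z : Ω → ℝ} (hZ : Integrable (fun ω => Z ω ^ 2) μ) {η : ℝ} (hη : 0 < η) :
    μ.real {ω | η ≤ |Z ω|} ≤ (∫ ω, Z ω ^ 2 ∂μ) / η ^ 2 := by
  have hset : {ω | η ≤ |Z ω|} = {ω | η ^ 2 ≤ Z ω ^ 2} := by
    ext ω
    simp only [Set.mem_ofPred_eq, sq_le_sq, abs_of_pos hη]
  rw [hset, le_div_iff₀ (by positivity), mul_comm]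
  exact mul_meas_ge_le_integral_of_nonneg (Eventually.of_forall fun ω => sq_nonneg _) hZ _

variable {Ω : Type*} {m m0 : MeasurableSpace Ω} {P : Measure Ω}

theorem condExp_sub_condExp_ae_eq_zero (hm : m ≤ m0) [SigmaFinite (P.trim hm)] {f : Ω → ℝ}
    (hf : Integrable f P) : P[f - P[f|m]|m] =ᵐ[P] 0 := by
  filter_upwards [condExp_sub hf integrable_condExp m] with ω hω
  rw [hω, Pi.sub_apply, condExp_of_stronglyMeasurable hm stronglyMeasurable_condExp
    integrable_condExp, sub_self, Pi.zero_apply]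

theorem condExp_indicator_sub_condExp_ae_eq_zero (hm : m ≤ m0) [SigmaFinite (P.trim hm)]
    {f : Ω → ℝ} (hf : Integrable f P) {s : Set Ω} (hs : MeasurableSet[m] s) :
    P[s.indicator (f - P[f|m])|m] =ᵐ[P] 0 := by
  filter_upwards [condExp_indicator (hf.sub integrable_condExp) hs,
    condExp_sub_condExp_ae_eq_zero hm hf] with ω hω hω0
  rw [hω, Pi.zero_apply]
  exact Set.indicator_apply_eq_zero.2 fun _ => hω0

theorem integral_mul_eq_zero_of_condExp_ae_eq_zero (hm : m ≤ m0) [SigmaFinite (P.trim hm)]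
    {X Y : Ω → ℝ} (hX : StronglyMeasurable[m] X) (hXY : Integrable (X * Y) P)
    (hY : Integrable Y P) (hY0 : P[Y|m] =ᵐ[P] 0) : ∫ ω, X ω * Y ω ∂P = 0 := by
  calc ∫ ω, X ω * Y ω ∂P = ∫ ω, P[X * Y|m] ω ∂P := (integral_condExp hm).symm
    _ = ∫ ω, X ω * P[Y|m] ω ∂P :=
        integral_congr_ae (condExp_mul_of_stronglyMeasurable_left hX hXY hY)
    _ = 0 := by
      rw [← integral_zero Ω ℝ]
      refine integral_congr_ae ?_
      filter_upwards [hY0] with ω hω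
      rw [hω, Pi.zero_apply, mul_zero]

theorem integral_sq_indicator_sub_condExp_le [IsFiniteMeasure P] (hm : m ≤ m0) {f : Ω → ℝ}
    (hf : MemLp f 2 P) {s : Set Ω} (hs : MeasurableSet[m] s) :
    ∫ ω, s.indicator (f - P[f|m]) ω ^ 2 ∂P ≤ ∫ ω in s, P[fun ω' => f ω' ^ 2|m] ω ∂P := by
  have hd : Integrable ((f - P[f|m]) ^ 2) P := (hf.sub (hf.condExp one_le_two)).integrable_sq
  calc ∫ ω, s.indicator (f - P[f|m]) ω ^ 2 ∂P = ∫ ω in s, (f ω - P[f|m] ω) ^ 2 ∂P := by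
        rw [← integral_indicator (hm s hs)]
        congr 1 with ω
        by_cases hω : ω ∈ s <;> simp [hω]
    _ = ∫ ω in s, Var[f; P | m] ω ∂P := (setIntegral_condVar (hm := hm) hd hs).symm
    _ ≤ ∫ ω in s, P[fun ω' => f ω' ^ 2|m] ω ∂P :=
        setIntegral_mono_ae_restrict integrable_condVar.integrableOn integrable_condExp.integrableOn
          (ae_restrict_of_ae (by exact condVar_ae_le_condExp_sq hm hf))

theorem integral_sq_sum_eq_sum_integral_sq_of_condExp_eq_zero [IsFiniteMeasure P]
    {F : ℕ → MeasurableSpace Ω} (hF : Monotone F) {e : ℕ → Ω → ℝ} (N : ℕ) (hF_le : ∀ l < N, F l ≤ m0)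
    (he_L2 : ∀ l < N, MemLp (e l) 2 P) (he_meas : ∀ l < N, StronglyMeasurable[F (l + 1)] (e l))
    (he_zero : ∀ l < N, P[e l|F l] =ᵐ[P] 0) :
    ∫ ω, (∑ l ∈ Finset.range N, e l ω) ^ 2 ∂P = ∑ l ∈ Finset.range N, ∫ ω, e l ω ^ 2 ∂P := by
  induction N with
  | zero => simp
  | succ N ih =>
    set W : Ω → ℝ := fun ω => ∑ l ∈ Finset.range N, e l ω
    have hW_meas : StronglyMeasurable[F N] W := Finset.stronglyMeasurable_fun_sum _ fun l hl =>
      (he_meas l (by grind)).mono (hF (Finset.mem_range.1 hl))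
    have hW_L2 : MemLp W 2 P := memLp_finsetSum _ fun l hl => he_L2 l (by grind)
    have heN := he_L2 N N.lt_succ_self
    have hWe : Integrable (W * e N) P := hW_L2.integrable_mul heN
    have hcross : ∫ ω, W ω * e N ω ∂P = 0 :=
      integral_mul_eq_zero_of_condExp_ae_eq_zero (hF_le N N.lt_succ_self) hW_meas hWe
        (heN.integrable one_le_two) (he_zero N N.lt_succ_self)
    calc ∫ ω, (∑ l ∈ Finset.range (N + 1), e l ω) ^ 2 ∂P
        = ∫ ω, (W ω ^ 2 + 2 * (W ω * e N ω) + e N ω ^ 2) ∂P := by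
          simp only [Finset.sum_range_succ, W]; congr 1 with ω; ring
      _ = ∫ ω, W ω ^ 2 ∂P + 2 * ∫ ω, W ω * e N ω ∂P + ∫ ω, e N ω ^ 2 ∂P := by
          have hWW := hW_L2.integrable_sq
          have hWe2 : Integrable (fun ω => 2 * (W ω * e N ω)) P := hWe.const_mul 2
          rw [integral_add (hWW.fun_add hWe2) heN.integrable_sq, integral_add hWW hWe2,
            integral_const_mul]
      _ = ∑ l ∈ Finset.range (N + 1), ∫ ω, e l ω ^ 2 ∂P := by
          rw [hcross, ih (by grind) (by grind) (by grind) (by grind), Finset.sum_range_succ]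
          ring


section Increments

variable {F : ℕ → MeasurableSpace Ω} {χ : ℕ → Ω → ℝ} {N : ℕ}

theorem MemLp.indicator_sub_condExp [IsFiniteMeasure P] {f : Ω → ℝ} (hf : MemLp f 2 P)
    {s : Set Ω} (hs : MeasurableSet s) : MemLp (s.indicator (f - P[f|m])) 2 P :=
  (hf.sub (hf.condExp one_le_two)).indicator hs

theorem measurableSet_sum_condExp_le (hF : Monotone F) (f : ℕ → Ω → ℝ) (ε : ℝ) (l : ℕ) :
    MeasurableSet[F l] {ω | ∑ k ∈ Finset.range (l + 1), P[f k|F k] ω ≤ ε} :=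
  (Finset.stronglyMeasurable_fun_sum (Finset.range (l + 1)) fun k hk =>
    (stronglyMeasurable_condExp (f := f k)).mono
      (hF (Nat.lt_succ_iff.1 (Finset.mem_range.1 hk)))).measurable measurableSet_Iic

theorem integral_sq_sum_indicator_sub_condExp_le [IsFiniteMeasure P] (hF : Monotone F)
    (hF_le : ∀ l < N, F l ≤ m0) (hχ_L2 : ∀ l < N, MemLp (χ l) 2 P)
    (hχ_meas : ∀ l < N, StronglyMeasurable[F (l + 1)] (χ l)) {S : ℕ → Set Ω}
    (hS : ∀ l, MeasurableSet[F l] (S l)) :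
    ∫ ω, (∑ l ∈ Finset.range N, (S l).indicator (χ l - P[χ l|F l]) ω) ^ 2 ∂P
      ≤ ∑ l ∈ Finset.range N, ∫ ω in S l, P[fun ω' => χ l ω' ^ 2|F l] ω ∂P := by
  rw [integral_sq_sum_eq_sum_integral_sq_of_condExp_eq_zero hF N hF_le
    (fun l hl => (hχ_L2 l hl).indicator_sub_condExp (hF_le l hl _ (hS l)))
    (fun l hl => ((hχ_meas l hl).sub (stronglyMeasurable_condExp.mono (hF l.le_succ))).indicator
      (hF l.le_succ _ (hS l)))
    (fun l hl => condExp_indicator_sub_condExp_ae_eq_zero (hF_le l hl)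
      ((hχ_L2 l hl).integrable one_le_two) (hS l))]
  exact Finset.sum_le_sum fun l hl =>
    integral_sq_indicator_sub_condExp_le (hF_le l (Finset.mem_range.1 hl))
      (hχ_L2 l (Finset.mem_range.1 hl)) (hS l)

theorem integral_sq_sum_truncated_sub_condExp_le [IsProbabilityMeasure P] (hF : Monotone F)
    (hF_le : ∀ l < N, F l ≤ m0) (hχ_L2 : ∀ l < N, MemLp (χ l) 2 P)
    (hχ_meas : ∀ l < N, StronglyMeasurable[F (l + 1)] (χ l)) {ε : ℝ} (hε : 0 ≤ ε) :
    ∫ ω, (∑ l ∈ Finset.range N,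
      {ω | ∑ k ∈ Finset.range (l + 1), P[fun ω' => χ k ω' ^ 2|F k] ω ≤ ε}.indicator
        (χ l - P[χ l|F l]) ω) ^ 2 ∂P ≤ ε := by
  set g : ℕ → Ω → ℝ := fun l => P[fun ω' => χ l ω' ^ 2|F l]
  set S : ℕ → Set Ω := fun l => {ω | ∑ k ∈ Finset.range (l + 1), g k ω ≤ ε}
  have hS : ∀ l, MeasurableSet[F l] (S l) := measurableSet_sum_condExp_le hF _ ε
  have hg_int : ∀ l ∈ Finset.range N, Integrable ((S l).indicator (g l)) P := fun l hl =>
    integrable_condExp.indicator (hF_le l (Finset.mem_range.1 hl) _ (hS l))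
  have hg_nonneg : ∀ᵐ ω ∂P, ∀ l, 0 ≤ g l ω :=
    ae_all_iff.2 fun l => condExp_nonneg (Eventually.of_forall fun ω => sq_nonneg _)
  calc _ ≤ ∑ l ∈ Finset.range N, ∫ ω in S l, g l ω ∂P :=
        integral_sq_sum_indicator_sub_condExp_le hF hF_le hχ_L2 hχ_meas hS
    _ = ∫ ω, ∑ l ∈ Finset.range N, (S l).indicator (g l) ω ∂P := by
        rw [integral_finsetSum _ hg_int]
        exact Finset.sum_congr rfl fun l hl =>
          (integral_indicator (hF_le l (Finset.mem_range.1 hl) _ (hS l))).symm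
    _ ≤ ∫ _, ε ∂P := integral_mono_ae (integrable_finsetSum _ hg_int) (integrable_const ε)
        (hg_nonneg.mono fun ω hω => by
          simpa only [S, Set.indicator_apply, Set.mem_ofPred_eq]
            using Finset.sum_range_ite_sum_range_le hω hε N)
    _ = ε := by simp

theorem measureReal_le_abs_sum_sub_condExp_le [IsProbabilityMeasure P] (hF : Monotone F)
    (hF_le : ∀ l < N, F l ≤ m0) (hχ_L2 : ∀ l < N, MemLp (χ l) 2 P)
    (hχ_meas : ∀ l < N, StronglyMeasurable[F (l + 1)] (χ l)) {ε η : ℝ} (hε : 0 ≤ ε)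
    (hη : 0 < η) :
    P.real {ω | η ≤ |∑ l ∈ Finset.range N, (χ l ω - P[χ l|F l] ω)|}
      ≤ ε / η ^ 2 + P.real {ω | ε ≤ |∑ l ∈ Finset.range N, P[fun ω' => χ l ω' ^ 2|F l] ω|} := by
  set g : ℕ → Ω → ℝ := fun l => P[fun ω' => χ l ω' ^ 2|F l]
  set S : ℕ → Set Ω := fun l => {ω | ∑ k ∈ Finset.range (l + 1), g k ω ≤ ε}
  set Z : Ω → ℝ := fun ω => ∑ l ∈ Finset.range N, (S l).indicator (χ l - P[χ l|F l]) ω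
  have hZ_int : Integrable (fun ω => Z ω ^ 2) P :=
    (memLp_finsetSum _ fun l hl => (hχ_L2 l (Finset.mem_range.1 hl)).indicator_sub_condExp
      (hF_le l (Finset.mem_range.1 hl) _ (measurableSet_sum_condExp_le hF _ ε l))).integrable_sq
  have hZ_sq : ∫ ω, Z ω ^ 2 ∂P ≤ ε :=
    integral_sq_sum_truncated_sub_condExp_le hF hF_le hχ_L2 hχ_meas hε
  have hg_nonneg : ∀ᵐ ω ∂P, ∀ l, 0 ≤ g l ω :=
    ae_all_iff.2 fun l => condExp_nonneg (Eventually.of_forall fun ω => sq_nonneg _)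
  have hcover : {ω | η ≤ |∑ l ∈ Finset.range N, (χ l ω - P[χ l|F l] ω)|}
      ≤ᵐ[P] ({ω | η ≤ |Z ω|} ∪ {ω | ε ≤ |∑ l ∈ Finset.range N, g l ω|} : Set Ω) := by
    filter_upwards [hg_nonneg] with ω hω hη_le
    by_cases hsum : ∑ l ∈ Finset.range N, g l ω ≤ ε
    · have hZ : Z ω = ∑ l ∈ Finset.range N, (χ l ω - P[χ l|F l] ω) :=
        Finset.sum_congr rfl fun l hl => Set.indicator_of_mem (s := S l)
          ((Finset.sum_le_sum_of_subset_of_nonneg (Finset.range_subset_range.2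
            (Finset.mem_range.1 hl)) fun k _ _ => hω k).trans hsum) _
      exact Or.inl (show η ≤ |Z ω| from hZ ▸ hη_le)
    · exact Or.inr ((not_le.1 hsum).le.trans (le_abs_self _))
  calc P.real {ω | η ≤ |∑ l ∈ Finset.range N, (χ l ω - P[χ l|F l] ω)|}
      ≤ P.real ({ω | η ≤ |Z ω|} ∪ {ω | ε ≤ |∑ l ∈ Finset.range N, g l ω|}) :=
        ENNReal.toReal_mono (measure_ne_top _ _) (measure_mono_ae hcover)
    _ ≤ P.real {ω | η ≤ |Z ω|} + P.real {ω | ε ≤ |∑ l ∈ Finset.range N, g l ω|} :=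
        measureReal_union_le _ _
    _ ≤ ε / η ^ 2 + P.real {ω | ε ≤ |∑ l ∈ Finset.range N, g l ω|} := by
        gcongr
        exact (measureReal_ge_le_integral_sq_div_sq hZ_int hη).trans (by gcongr)

end Increments

end MeasureTheory

/-- Genon-Catalot and Jacod, Lemma 9: for a triangular array `(χ^n_l)_{0 ≤ l ≤ L_n}`
of square-integrable random variables with `χ^n_l` measurable w.r.t. `𝓕^n_{l+1}`, if
`∑_{l=0}^{L_n} E[χ^n_l | 𝓕^n_l] → U` in probability and
`∑_{l=0}^{L_n} E[(χ^n_l)² | 𝓕^n_l] → 0` in probability, then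
`∑_{l=0}^{L_n} χ^n_l → U` in probability. -/
theorem tendstoInMeasure_sum_of_condexp_tendsto
    {Ω : Type*} [m0 : MeasurableSpace Ω] (P : Measure Ω) [IsProbabilityMeasure P]
    (L : ℕ → ℕ)
    (F : (n : ℕ) → ℕ → MeasurableSpace Ω)
    (hF_mono : ∀ n l, F n l ≤ F n (l + 1))
    (hF_le : ∀ n l, l ≤ L n + 1 → F n l ≤ m0)
    (χ : (n : ℕ) → ℕ → Ω → ℝ)
    (hχ_L2 : ∀ n l, l ≤ L n → MemLp (χ n l) 2 P)
    (hχ_meas : ∀ n l, l ≤ L n → StronglyMeasurable[F n (l + 1)] (χ n l))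
    (U : Ω → ℝ)
    (h1 : TendstoInMeasure P
      (fun n ω => ∑ l ∈ Finset.range (L n + 1), (P[χ n l | F n l]) ω) atTop U)
    (h2 : TendstoInMeasure P
      (fun n ω => ∑ l ∈ Finset.range (L n + 1), (P[fun ω' => (χ n l ω') ^ 2 | F n l]) ω) atTop
      (fun _ => 0)) :
    TendstoInMeasure P (fun n ω => ∑ l ∈ Finset.range (L n + 1), χ n l ω) atTop U := by
  have hD : TendstoInMeasure P
      (fun n ω => ∑ l ∈ Finset.range (L n + 1), (χ n l ω - P[χ n l|F n l] ω)) atTop 0 :=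
    tendstoInMeasure_zero_of_measureReal_le h2 fun n η hη ε hε =>
      measureReal_le_abs_sum_sub_condExp_le (monotone_nat_of_le_succ (hF_mono n))
        (fun l hl => hF_le n l (by omega)) (fun l hl => hχ_L2 n l (by omega))
        (fun l hl => hχ_meas n l (by omega)) hε.le hη
  refine TendstoInMeasure.congr (fun n => .of_forall fun ω => ?_) (.of_forall fun ω => zero_add _)
    (hD.add h1)
  simp only [← Finset.sum_add_distrib, sub_add_cancel]
end

section
/- Suppose μ((0,1)) > 0. Then for every k ≥ 1, the (k+1)×(k+1) symmetric tridiagonal matrix K̃ with K̃_{0,0} = v₁, K̃_{j,j} = v₁ + v₂ for 1 ≤ j ≤ k−1, K̃_{k,k} = v₂, K̃_{j,j+1} = K̃_{j+1,j} = c for 0 ≤ j ≤ k−1, and all other entries 0, is positive definite; in particular it is invertible. -/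
/-!
With `F s = μ [0,s]` and `G s = μ [s,1]`, the numbers `v₁, c, v₂` are the Gram entries of `G, F`
in `L²[0,1]`, and the quadratic form of `K̃` at `x` is `∑ⱼ ∫ (xⱼ G + xⱼ₊₁ F)²`. So `K̃` is
positive definite once no nontrivial combination `p F + q G` vanishes a.e. As `μ` has only
countably many atoms, `F + G = μ [0,1] > 0` a.e.; a vanishing combination would then force the
monotone function `F` to be a.e. constant on `(0,1)`, hence constant there, i.e. `μ (0,1) = 0`.
-/

open MeasureTheory

/-- The `(k+1) × (k+1)` symmetric tridiagonal matrix `K̃` with `K̃_{0,0} = v₁`,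
`K̃_{j,j} = v₁ + v₂` for `1 ≤ j ≤ k-1`, `K̃_{k,k} = v₂`, off-diagonal entries `c` on
the sub- and super-diagonals, and `0` elsewhere. -/
def Ktilde (k : ℕ) (v₁ v₂ c : ℝ) : Matrix (Fin (k + 1)) (Fin (k + 1)) ℝ := fun i j =>
  if i = j then (if (i : ℕ) = 0 then v₁ else if (i : ℕ) = k then v₂ else v₁ + v₂)
  else if (i : ℕ) + 1 = (j : ℕ) ∨ (j : ℕ) + 1 = (i : ℕ) then c else 0

open Matrix Set Filter Topology

lemma Fin.sum_sum_ite_val_eq_succ {M : Type*} [AddCommMonoid M] {k : ℕ}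
    (f : Fin (k + 1) → Fin (k + 1) → M) :
    ∑ i : Fin (k + 1), ∑ j : Fin (k + 1), (if (j : ℕ) = (i : ℕ) + 1 then f i j else 0) =
      ∑ p : Fin k, f p.castSucc p.succ := by
  rw [Fin.sum_univ_castSucc, Finset.sum_eq_zero (fun j _ => if_neg (by simp; omega)), add_zero]
  refine Finset.sum_congr rfl fun p _ => ?_
  rw [Finset.sum_eq_single p.succ (fun j _ hj => if_neg fun h => hj (Fin.ext (by simp_all)))
    (by simp), if_pos (by simp)]

lemma Ktilde_apply {k : ℕ} (hk : 1 ≤ k) (v₁ v₂ c : ℝ) (i j : Fin (k + 1)) :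
    Ktilde k v₁ v₂ c i j =
      (if j = i then (if (i : ℕ) < k then v₁ else 0) + (if 0 < (i : ℕ) then v₂ else 0) else 0)
        + (if (j : ℕ) = i + 1 then c else 0) + (if (i : ℕ) = j + 1 then c else 0) := by
  simp only [Ktilde, Fin.ext_iff]
  split_ifs <;> first | (exfalso; omega) | ring

lemma Ktilde_isHermitian (k : ℕ) (v₁ v₂ c : ℝ) : (Ktilde k v₁ v₂ c).IsHermitian := by
  ext i j
  by_cases h : i = j
  · simp [h]
  · simp [Ktilde, h, Ne.symm h, or_comm]

lemma Ktilde_dotProduct_mulVec {k : ℕ} (hk : 1 ≤ k) (v₁ v₂ c : ℝ) (x : Fin (k + 1) → ℝ) :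
    x ⬝ᵥ (Ktilde k v₁ v₂ c *ᵥ x) =
      ∑ p : Fin k,
        (v₁ * x p.castSucc ^ 2 + 2 * c * x p.castSucc * x p.succ + v₂ * x p.succ ^ 2) := by
  have hdiag_castSucc (g : Fin (k + 1) → ℝ) :
      ∑ i : Fin (k + 1), (if (i : ℕ) < k then g i else 0) = ∑ p : Fin k, g p.castSucc := by
    simp [Fin.sum_univ_castSucc]
  have hdiag_succ (g : Fin (k + 1) → ℝ) :
      ∑ i : Fin (k + 1), (if 0 < (i : ℕ) then g i else 0) = ∑ p : Fin k, g p.succ := by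
    simp [Fin.sum_univ_succ]
  have hsubdiag := Fin.sum_sum_ite_val_eq_succ fun i j => x j * (c * x i)
  rw [Finset.sum_comm] at hsubdiag
  simp only [dotProduct, mulVec, Finset.mul_sum, Ktilde_apply hk, add_mul, mul_add, ite_mul,
    mul_ite, zero_mul, mul_zero, Finset.sum_add_distrib, Finset.sum_ite_eq', Finset.mem_univ,
    if_true]
  rw [Fin.sum_sum_ite_val_eq_succ (fun i j => x i * (c * x j)), hsubdiag, hdiag_castSucc,
    hdiag_succ]
  simp only [← Finset.sum_add_distrib]
  exact Finset.sum_congr rfl fun p _ => by ring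

lemma Ktilde_posDef_of_forall_pos {k : ℕ} (hk : 1 ≤ k) {v₁ v₂ c : ℝ}
    (hQ : ∀ p q : ℝ, p ≠ 0 ∨ q ≠ 0 → 0 < v₁ * p ^ 2 + 2 * c * p * q + v₂ * q ^ 2) :
    (Ktilde k v₁ v₂ c).PosDef := by
  have hQ_nonneg (p q : ℝ) : 0 ≤ v₁ * p ^ 2 + 2 * c * p * q + v₂ * q ^ 2 := by
    by_cases h : p ≠ 0 ∨ q ≠ 0
    · exact (hQ p q h).le
    · obtain ⟨rfl, rfl⟩ : p = 0 ∧ q = 0 := by tauto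
      simp
  refine PosDef.of_dotProduct_mulVec_pos (Ktilde_isHermitian k v₁ v₂ c) fun x hx => ?_
  rw [star_trivial, Ktilde_dotProduct_mulVec hk]
  obtain ⟨i, hi⟩ := Function.ne_iff.1 hx
  refine Finset.sum_pos' (fun p _ => hQ_nonneg _ _) ?_
  obtain ⟨p, rfl | rfl⟩ : ∃ p : Fin k, i = p.castSucc ∨ i = p.succ := by
    rcases Fin.eq_castSucc_or_eq_last i with ⟨p, rfl⟩ | rfl
    · exact ⟨p, .inl rfl⟩
    · exact ⟨⟨k - 1, by omega⟩, .inr (Fin.ext (by simp; omega))⟩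
  exacts [⟨p, Finset.mem_univ _, hQ _ _ (.inl hi)⟩, ⟨p, Finset.mem_univ _, hQ _ _ (.inr hi)⟩]

lemma ae_measure_singleton_eq_zero {α : Type*} [MeasurableSpace α] [MeasurableSingletonClass α]
    (μ ν : Measure α) [SFinite μ] [NullSingletonClass ν] : ∀ᵐ x ∂ν, μ {x} = 0 := by
  have hatoms : {x | 0 < μ {x}}.Countable :=
    Measure.countable_meas_pos_of_disjoint_iUnion (fun _ => measurableSet_singleton _)
      fun _ _ h => disjoint_singleton.2 h
  filter_upwards [hatoms.ae_notMem ν] with x hx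
  simpa using hx

lemma measureReal_Icc_add_measureReal_Icc (μ : Measure ℝ) [IsFiniteMeasure μ] {u s v : ℝ}
    (hs : μ {s} = 0) (hus : u ≤ s) (hsv : s ≤ v) :
    μ.real (Icc u s) + μ.real (Icc s v) = μ.real (Icc u v) := by
  have h := measureReal_union_add_inter (μ := μ) (s := Icc u s)
    (measurableSet_Icc (a := s) (b := v))
  rwa [Icc_union_Icc_eq_Icc hus hsv, Icc_inter_Icc_eq_singleton hus hsv,
    show μ.real {s} = 0 by simp [measureReal_def, hs], add_zero, eq_comm] at h

lemma monotone_measureReal_Icc (μ : Measure ℝ) [IsFiniteMeasure μ] (u : ℝ) :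
    Monotone fun s => μ.real (Icc u s) :=
  fun _ _ hst => measureReal_mono (Icc_subset_Icc_right hst)

lemma antitone_measureReal_Icc (μ : Measure ℝ) [IsFiniteMeasure μ] (v : ℝ) :
    Antitone fun s => μ.real (Icc s v) :=
  fun _ _ hst => measureReal_mono (Icc_subset_Icc_left hst)

lemma measure_Ioc_eq_zero_of_measureReal_Icc_eq (μ : Measure ℝ) [IsFiniteMeasure μ] {w s t : ℝ}
    (hws : w ≤ s) (hst : s ≤ t) (h : μ.real (Icc w s) = μ.real (Icc w t)) : μ (Ioc s t) = 0 := by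
  have hdisj : Disjoint (Icc w s) (Ioc s t) := disjoint_left.2 fun x hx hx' => hx'.1.not_ge hx.2
  have hsplit := measureReal_union (μ := μ) hdisj measurableSet_Ioc
  rw [Icc_union_Ioc_eq_Icc hws hst, ← h] at hsplit
  exact (measureReal_eq_zero_iff).1 (by linarith)

lemma measure_Ioo_eq_zero_of_forall_Ioc (μ : Measure ℝ) {u v : ℝ}
    (h : ∀ s ∈ Ioo u v, ∀ t ∈ Ioo u v, s < t → μ (Ioc s t) = 0) : μ (Ioo u v) = 0 := by
  rcases le_or_gt v u with hvu | huv
  · simp [Ioo_eq_empty_of_le hvu]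
  obtain ⟨s, -, hs_mem, hs_lim⟩ := exists_seq_strictAnti_tendsto' huv
  obtain ⟨t, -, ht_mem, ht_lim⟩ := exists_seq_strictMono_tendsto' huv
  have hnull (n : ℕ) : μ (Ioc (s n) (t n)) = 0 := by
    rcases lt_or_ge (s n) (t n) with hst | hts
    · exact h _ (hs_mem n) _ (ht_mem n) hst
    · simp [Ioc_eq_empty_of_le hts]
  refine measure_mono_null (fun x hx => ?_) (measure_iUnion_null hnull)
  obtain ⟨n, hsn, htn⟩ :=
    ((hs_lim.eventually (gt_mem_nhds hx.1)).and (ht_lim.eventually (lt_mem_nhds hx.2))).exists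
  exact mem_iUnion.2 ⟨n, hsn, htn.le⟩

lemma Monotone.eq_of_ae_restrict_Ioo_eq {f : ℝ → ℝ} (hf : Monotone f) {u v C x : ℝ}
    (h : ∀ᵐ s ∂volume.restrict (Ioo u v), f s = C) (hx : x ∈ Ioo u v) : f x = C := by
  have hexists (a b : ℝ) (hab : Ioo a b ⊆ Ioo u v) (hlt : a < b) : ∃ s ∈ Ioo a b, f s = C := by
    have : (ae (volume.restrict (Ioo a b))).NeBot := ae_neBot.2 (by simp [hlt])
    exact ((ae_restrict_mem measurableSet_Ioo).and
      (ae_restrict_of_ae_restrict_of_subset hab h)).exists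
  obtain ⟨s, hs, hfs⟩ := hexists u x (Ioo_subset_Ioo_right hx.2.le) hx.1
  obtain ⟨t, ht, hft⟩ := hexists x v (Ioo_subset_Ioo_left hx.1.le) hx.2
  exact le_antisymm (hft ▸ hf ht.1.le) (hfs ▸ hf hs.2.le)

lemma measure_Ioo_eq_zero_of_ae_measureReal_Icc_eq (μ : Measure ℝ) [IsFiniteMeasure μ]
    {u v C : ℝ} (h : ∀ᵐ s ∂volume.restrict (Ioo u v), μ.real (Icc u s) = C) : μ (Ioo u v) = 0 := by
  have hmono := monotone_measureReal_Icc μ u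
  refine measure_Ioo_eq_zero_of_forall_Ioc μ fun s hs t ht hst =>
    measure_Ioc_eq_zero_of_measureReal_Icc_eq μ hs.1.le hst.le ?_
  rw [hmono.eq_of_ae_restrict_Ioo_eq h hs, hmono.eq_of_ae_restrict_Ioo_eq h ht]

lemma integral_mul_add_mul_sq {α : Type*} [MeasurableSpace α] {ν : Measure α} {f g : α → ℝ}
    (hf : MemLp f 2 ν) (hg : MemLp g 2 ν) (p q : ℝ) :
    ∫ x, (p * f x + q * g x) ^ 2 ∂ν =
      p ^ 2 * ∫ x, f x ^ 2 ∂ν + 2 * p * q * ∫ x, f x * g x ∂ν + q ^ 2 * ∫ x, g x ^ 2 ∂ν := by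
  have hf2 : Integrable (fun x => p ^ 2 * f x ^ 2) ν := hf.integrable_sq.const_mul _
  have hfg : Integrable (fun x => 2 * p * q * (f x * g x)) ν := (hf.integrable_mul hg).const_mul _
  have hg2 : Integrable (fun x => q ^ 2 * g x ^ 2) ν := hg.integrable_sq.const_mul _
  calc ∫ x, (p * f x + q * g x) ^ 2 ∂ν
      = ∫ x, (p ^ 2 * f x ^ 2 + 2 * p * q * (f x * g x)) + q ^ 2 * g x ^ 2 ∂ν := by
        congr 1; ext x; ring
    _ = _ := by
        have h12 : Integrable (fun x => p ^ 2 * f x ^ 2 + 2 * p * q * (f x * g x)) ν := hf2.add hfg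
        rw [integral_add h12 hg2, integral_add hf2 hfg, integral_const_mul,
          integral_const_mul, integral_const_mul]

lemma integral_sq_measureReal_Icc_pos (μ : Measure ℝ) [IsFiniteMeasure μ] {u v : ℝ}
    (hμ : 0 < μ (Ioo u v)) {p q : ℝ} (hpq : p ≠ 0 ∨ q ≠ 0) :
    0 < ∫ s in Icc u v, (p * μ.real (Icc u s) + q * μ.real (Icc s v)) ^ 2 := by
  set a := fun s => μ.real (Icc u s)
  set b := fun s => μ.real (Icc s v)
  have ha : Monotone a := monotone_measureReal_Icc μ u
  have hb : Antitone b := antitone_measureReal_Icc μ v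
  have hint : Integrable (fun s => (p * a s + q * b s) ^ 2) (volume.restrict (Icc u v)) :=
    ((((ha.monotoneOn _).memLp_isCompact isCompact_Icc).const_mul p).add
      (((hb.antitoneOn _).memLp_isCompact isCompact_Icc).const_mul q)).integrable_sq
  refine (integral_nonneg fun s => sq_nonneg _).lt_of_ne' fun hzero => ?_
  have hcomb : ∀ᵐ s ∂volume.restrict (Icc u v), p * a s + q * b s = 0 := by
    filter_upwards [(integral_eq_zero_iff_of_nonneg (fun s => sq_nonneg _) hint).1 hzero]
      with s hs
    exact pow_eq_zero_iff two_ne_zero |>.1 hs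
  have hsum : ∀ᵐ s ∂volume.restrict (Icc u v), a s + b s = μ.real (Icc u v) := by
    filter_upwards [ae_restrict_of_ae (ae_measure_singleton_eq_zero μ volume),
      ae_restrict_mem measurableSet_Icc] with s hs hmem
    exact measureReal_Icc_add_measureReal_Icc μ hs hmem.1 hmem.2
  have hlin : ∀ᵐ s ∂volume.restrict (Icc u v), (p - q) * a s = -q * μ.real (Icc u v) := by
    filter_upwards [hcomb, hsum] with s h₁ h₂
    linear_combination h₁ - q * h₂
  rcases eq_or_ne p q with rfl | hne
  · have huv : u < v := nonempty_Ioo.1 (nonempty_of_measure_ne_zero hμ.ne')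
    have : (ae (volume.restrict (Icc u v))).NeBot := ae_neBot.2 (by simp [huv])
    have hM : 0 < μ.real (Icc u v) :=
      (ENNReal.toReal_pos hμ.ne' (measure_ne_top μ _)).trans_le
        (measureReal_mono Ioo_subset_Icc_self)
    obtain ⟨s, hs⟩ := hlin.exists
    have hp : p = 0 := by nlinarith
    exact hpq.elim (· hp) (· hp)
  · refine hμ.ne' (measure_Ioo_eq_zero_of_ae_measureReal_Icc_eq μ
      (C := -q * μ.real (Icc u v) / (p - q)) ?_)
    filter_upwards [ae_restrict_of_ae_restrict_of_subset Ioo_subset_Icc_self hlin] with s hs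
    rw [eq_div_iff (sub_ne_zero.2 hne), ← hs, mul_comm]

theorem Ktilde_posDef_general
    (μ : Measure ℝ) [IsProbabilityMeasure μ]
    (hμ : 0 < μ (Set.Ioo (0 : ℝ) 1))
    (k : ℕ) (hk : 1 ≤ k)
    (v₁ v₂ c : ℝ)
    (hv₁ : v₁ = ∫ s in Set.Icc (0 : ℝ) 1, ((μ (Set.Icc s 1)).toReal) ^ 2)
    (hv₂ : v₂ = ∫ s in Set.Icc (0 : ℝ) 1, ((μ (Set.Icc 0 s)).toReal) ^ 2)
    (hc : c = ∫ s in Set.Icc (0 : ℝ) 1, (μ (Set.Icc 0 s)).toReal * (μ (Set.Icc s 1)).toReal) :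
    (Ktilde k v₁ v₂ c).PosDef ∧ IsUnit (Ktilde k v₁ v₂ c).det := by
  have hQ (p q : ℝ) (hpq : p ≠ 0 ∨ q ≠ 0) : 0 < v₁ * p ^ 2 + 2 * c * p * q + v₂ * q ^ 2 := by
    have hpos := integral_sq_measureReal_Icc_pos μ hμ hpq.symm
    rw [integral_mul_add_mul_sq
      (((monotone_measureReal_Icc μ 0).monotoneOn _).memLp_isCompact isCompact_Icc)
      (((antitone_measureReal_Icc μ 1).antitoneOn _).memLp_isCompact isCompact_Icc)] at hpos
    simp only [measureReal_def] at hpos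
    rw [hv₁, hv₂, hc]
    linarith
  have hPD := Ktilde_posDef_of_forall_pos hk hQ
  exact ⟨hPD, hPD.det_pos.ne'.isUnit⟩

/-- if `μ` is a probability measure on `[0,1]` with `μ((0,1)) > 0` then, with
`v₁ = ∫₀¹ μ([s,1])² ds`, `v₂ = ∫₀¹ μ([0,s])² ds` and `c = ∫₀¹ μ([0,s])μ([s,1]) ds`,
the matrix `K̃` is positive definite, and in particular invertible. -/
theorem Ktilde_posDef
    (μ : Measure ℝ) [IsProbabilityMeasure μ] (hμsupp : μ (Set.Icc (0 : ℝ) 1)ᶜ = 0)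
    (hμ : 0 < μ (Set.Ioo (0 : ℝ) 1))
    (k : ℕ) (hk : 1 ≤ k)
    (v₁ v₂ c : ℝ)
    (hv₁ : v₁ = ∫ s in Set.Icc (0 : ℝ) 1, ((μ (Set.Icc s 1)).toReal) ^ 2)
    (hv₂ : v₂ = ∫ s in Set.Icc (0 : ℝ) 1, ((μ (Set.Icc 0 s)).toReal) ^ 2)
    (hc : c = ∫ s in Set.Icc (0 : ℝ) 1, (μ (Set.Icc 0 s)).toReal * (μ (Set.Icc s 1)).toReal) :
    (Ktilde k v₁ v₂ c).PosDef ∧ IsUnit (Ktilde k v₁ v₂ c).det :=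
  Ktilde_posDef_general μ hμ k hk v₁ v₂ c hv₁ hv₂ hc
end

section
/- Suppose μ((0,1)) > 0. Then v₁ > 0, v₂ > 0, and c² < v₁ · v₂. -/
/-!
Write `F s = μ [0, s]` and `G s = μ [s, 1]`. Since `μ (0, 1) > 0`, some `[a, b] ⊆ (0, 1)` carries
mass `m > 0`; then `G ≥ m` on `(0, a)` and `F ≥ m` on `(b, 1)`, so `v₁, v₂ > 0`. By the equality
case of Cauchy–Schwarz it remains to see that `F` is not a.e. equal to `t G`: across `[a, b]` the
function `F` increases by at least `m` while `G` does not increase, which excludes `t ≥ 0`, and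
`F > 0 ≥ t G` on `(b, 1)` excludes `t < 0`.
-/

open MeasureTheory Set
open scoped ENNReal

section

variable {α : Type*} [MeasurableSpace α] {ν : Measure α}

theorem integral_sq_pos {h : α → ℝ} (hh : MemLp h 2 ν) (hne : ¬ h =ᵐ[ν] 0) :
    0 < ∫ x, h x ^ 2 ∂ν := by
  refine (integral_nonneg fun x => sq_nonneg (h x)).lt_of_ne' fun h0 => hne ?_
  filter_upwards
    [(integral_eq_zero_iff_of_nonneg (fun x => sq_nonneg (h x)) hh.integrable_sq).1 h0] with x hx
  exact (pow_eq_zero_iff two_ne_zero).1 hx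

theorem integral_sub_mul_sq {f g : α → ℝ} (hf : MemLp f 2 ν) (hg : MemLp g 2 ν) (t : ℝ) :
    ∫ x, (f x - t * g x) ^ 2 ∂ν
      = ∫ x, f x ^ 2 ∂ν - 2 * t * ∫ x, f x * g x ∂ν + t ^ 2 * ∫ x, g x ^ 2 ∂ν := by
  have hfg : Integrable (fun x => 2 * t * (f x * g x)) ν := (hf.integrable_mul hg).const_mul _
  have hg2 : Integrable (fun x => t ^ 2 * g x ^ 2) ν := hg.integrable_sq.const_mul _
  have hexp : (fun x => (f x - t * g x) ^ 2)
      = fun x => f x ^ 2 - 2 * t * (f x * g x) + t ^ 2 * g x ^ 2 := by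
    ext x; ring
  rw [hexp, integral_add (f := fun x => f x ^ 2 - 2 * t * (f x * g x))
      (hf.integrable_sq.sub hfg) hg2,
    integral_sub hf.integrable_sq hfg, integral_const_mul, integral_const_mul]

theorem integral_mul_sq_lt_of_not_ae_eq_smul {f g : α → ℝ} (hf : MemLp f 2 ν)
    (hg : MemLp g 2 ν) (hg0 : ¬ g =ᵐ[ν] 0) (hfg : ∀ t : ℝ, ¬ f =ᵐ[ν] t • g) :
    (∫ x, f x * g x ∂ν) ^ 2 < (∫ x, f x ^ 2 ∂ν) * ∫ x, g x ^ 2 ∂ν := by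
  set c := ∫ x, f x * g x ∂ν
  set v := ∫ x, g x ^ 2 ∂ν
  have hv : 0 < v := integral_sq_pos hg hg0
  have hpos : 0 < ∫ x, (f x - c / v * g x) ^ 2 ∂ν := by
    refine integral_sq_pos (hf.sub (hg.const_mul _)) fun h => hfg (c / v) ?_
    filter_upwards [h] with x hx
    simpa [sub_eq_zero] using hx
  rw [integral_sub_mul_sq hf hg] at hpos
  have hexpand : v * (∫ x, f x ^ 2 ∂ν - 2 * (c / v) * c + (c / v) ^ 2 * v)
      = (∫ x, f x ^ 2 ∂ν) * v - c ^ 2 := by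
    field_simp
    ring
  linarith [mul_pos hv hpos]

theorem memLp_measureReal_of_measurable {β : Type*} [MeasurableSpace β] {μ : Measure α}
    [IsFiniteMeasure μ] {ν : Measure β} [IsFiniteMeasure ν] {I : β → Set α} (p : ℝ≥0∞)
    (hI : Measurable fun s => μ.real (I s)) : MemLp (fun s => μ.real (I s)) p ν :=
  .of_bound hI.aestronglyMeasurable (μ.real univ) <| ae_of_all _ fun s => by
    rw [Real.norm_of_nonneg measureReal_nonneg]
    exact measureReal_mono (subset_univ _)

end

theorem exists_Icc_subset_Ioo_measure_pos {μ : Measure ℝ} [IsFiniteMeasure μ] {x y : ℝ}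
    (h : 0 < μ (Ioo x y)) : ∃ a b, x < a ∧ a ≤ b ∧ b < y ∧ 0 < μ (Icc a b) := by
  obtain ⟨K, hKsub, hK, hKpos⟩ := isOpen_Ioo.exists_lt_isCompact h
  have hne : K.Nonempty := nonempty_of_measure_ne_zero hKpos.ne'
  exact ⟨sInf K, sSup K, (hKsub (hK.sInf_mem hne)).1,
    csInf_le_csSup hne hK.bddBelow hK.bddAbove, (hKsub (hK.sSup_mem hne)).2,
    hKpos.trans_le (measure_mono (subset_Icc_csInf_csSup hK.bddBelow hK.bddAbove))⟩

theorem exists_mem_Ioo_of_ae_restrict {S : Set ℝ} {P : ℝ → Prop} {p q : ℝ} (hpq : p < q)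
    (hS : Ioo p q ⊆ S) (hP : ∀ᵐ s ∂volume.restrict S, P s) : ∃ s ∈ Ioo p q, P s := by
  have : (ae (volume.restrict (Ioo p q))).NeBot := ae_restrict_neBot.2 (by simp [hpq])
  exact ((ae_restrict_mem measurableSet_Ioo).and
    (ae_restrict_of_ae_restrict_of_subset hS hP)).exists

section

variable {μ : Measure ℝ} [IsFiniteMeasure μ] {a b : ℝ}

theorem measureReal_Icc_add_measureReal_Icc_le {x s₁ s₂ : ℝ} (hxa : x ≤ a) (hab : a ≤ b)
    (h₁ : s₁ < a) (h₂ : b ≤ s₂) : μ.real (Icc x s₁) + μ.real (Icc a b) ≤ μ.real (Icc x s₂) := by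
  rw [← measureReal_union
    (disjoint_left.2 fun s hs hs' => not_le_of_gt (hs.2.trans_lt h₁) hs'.1) measurableSet_Icc]
  exact measureReal_mono
    (union_subset (Icc_subset_Icc_right (h₁.le.trans (hab.trans h₂))) (Icc_subset_Icc hxa h₂))

theorem not_ae_eq_zero_measureReal_Icc_one (ha : 0 < a) (hab : a ≤ b) (hb : b ≤ 1)
    (hm : 0 < μ.real (Icc a b)) :
    ¬ (fun s => μ.real (Icc s 1)) =ᵐ[volume.restrict (Icc 0 1)] 0 := by
  intro h
  obtain ⟨s, hs, hs0⟩ := exists_mem_Ioo_of_ae_restrict ha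
    (Ioo_subset_Icc_self.trans (Icc_subset_Icc_right (hab.trans hb))) h
  have : μ.real (Icc a b) ≤ μ.real (Icc s 1) := measureReal_mono (Icc_subset_Icc hs.2.le hb)
  simp only [Pi.zero_apply] at hs0
  linarith

theorem not_ae_eq_smul_measureReal_Icc (ha : 0 < a) (hab : a ≤ b) (hb : b < 1)
    (hm : 0 < μ.real (Icc a b)) (t : ℝ) :
    ¬ (fun s => μ.real (Icc 0 s)) =ᵐ[volume.restrict (Icc 0 1)] t • fun s => μ.real (Icc s 1) := by
  intro h
  obtain ⟨s₁, hs₁, h₁⟩ := exists_mem_Ioo_of_ae_restrict ha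
    (Ioo_subset_Icc_self.trans (Icc_subset_Icc_right (by linarith))) h
  obtain ⟨s₂, hs₂, h₂⟩ := exists_mem_Ioo_of_ae_restrict hb
    (Ioo_subset_Icc_self.trans (Icc_subset_Icc_left (by linarith))) h
  simp only [Pi.smul_apply, smul_eq_mul] at h₁ h₂
  have hjump : μ.real (Icc 0 s₁) + μ.real (Icc a b) ≤ μ.real (Icc 0 s₂) :=
    measureReal_Icc_add_measureReal_Icc_le ha.le hab hs₁.2 hs₂.1.le
  have htail : μ.real (Icc s₂ 1) ≤ μ.real (Icc s₁ 1) :=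
    measureReal_mono (Icc_subset_Icc_left (by linarith [hs₁.2, hs₂.1]))
  have hF₁ : 0 ≤ μ.real (Icc 0 s₁) := measureReal_nonneg
  have hG₂ : 0 ≤ μ.real (Icc s₂ 1) := measureReal_nonneg
  rcases le_or_gt 0 t with ht | ht
  · nlinarith [mul_le_mul_of_nonneg_left htail ht]
  · nlinarith [mul_nonpos_of_nonpos_of_nonneg ht.le hG₂]

end

theorem v1_pos_v2_pos_and_c_sq_lt_v1_mul_v2_general
    (μ : Measure ℝ) [IsProbabilityMeasure μ]
    (hμ : 0 < μ (Set.Ioo (0 : ℝ) 1))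
    (v₁ v₂ c : ℝ)
    (hv₁ : v₁ = ∫ s in Set.Icc (0 : ℝ) 1, ((μ (Set.Icc s 1)).toReal) ^ 2)
    (hv₂ : v₂ = ∫ s in Set.Icc (0 : ℝ) 1, ((μ (Set.Icc 0 s)).toReal) ^ 2)
    (hc : c = ∫ s in Set.Icc (0 : ℝ) 1, (μ (Set.Icc 0 s)).toReal * (μ (Set.Icc s 1)).toReal) :
    0 < v₁ ∧ 0 < v₂ ∧ c ^ 2 < v₁ * v₂ := by
  obtain ⟨a, b, ha, hab, hb, hm⟩ := exists_Icc_subset_Ioo_measure_pos hμ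
  have hm : 0 < μ.real (Icc a b) := ENNReal.toReal_pos hm.ne' (measure_ne_top μ _)
  have hF : MemLp (fun s => μ.real (Icc 0 s)) 2 (volume.restrict (Icc 0 1)) :=
    memLp_measureReal_of_measurable 2 (Monotone.measurable fun _ _ h =>
      measureReal_mono (Icc_subset_Icc_right h))
  have hG : MemLp (fun s => μ.real (Icc s 1)) 2 (volume.restrict (Icc 0 1)) :=
    memLp_measureReal_of_measurable 2 (Antitone.measurable fun _ _ h =>
      measureReal_mono (Icc_subset_Icc_left h))
  have hFG := not_ae_eq_smul_measureReal_Icc ha hab hb hm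
  have hG0 := not_ae_eq_zero_measureReal_Icc_one ha hab hb.le hm
  have hF0 : ¬ (fun s => μ.real (Icc 0 s)) =ᵐ[volume.restrict (Icc 0 1)] 0 := by
    simpa only [zero_smul] using hFG 0
  subst hv₁ hv₂ hc
  refine ⟨integral_sq_pos hG hG0, integral_sq_pos hF hF0, ?_⟩
  rw [mul_comm]
  exact integral_mul_sq_lt_of_not_ae_eq_smul hF hG hG0 hFG

/-- if `μ` is a probability measure on `[0,1]` with `μ((0,1)) > 0` then, with
`v₁ = ∫₀¹ μ([s,1])² ds`, `v₂ = ∫₀¹ μ([0,s])² ds` and `c = ∫₀¹ μ([0,s])μ([s,1]) ds`, one has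
`v₁ > 0`, `v₂ > 0` and `c² < v₁ v₂`. -/
theorem v1_pos_v2_pos_and_c_sq_lt_v1_mul_v2
    (μ : Measure ℝ) [IsProbabilityMeasure μ] (hμsupp : μ (Set.Icc (0 : ℝ) 1)ᶜ = 0)
    (hμ : 0 < μ (Set.Ioo (0 : ℝ) 1))
    (v₁ v₂ c : ℝ)
    (hv₁ : v₁ = ∫ s in Set.Icc (0 : ℝ) 1, ((μ (Set.Icc s 1)).toReal) ^ 2)
    (hv₂ : v₂ = ∫ s in Set.Icc (0 : ℝ) 1, ((μ (Set.Icc 0 s)).toReal) ^ 2)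
    (hc : c = ∫ s in Set.Icc (0 : ℝ) 1, (μ (Set.Icc 0 s)).toReal * (μ (Set.Icc s 1)).toReal) :
    0 < v₁ ∧ 0 < v₂ ∧ c ^ 2 < v₁ * v₂ :=
  v1_pos_v2_pos_and_c_sq_lt_v1_mul_v2_general μ hμ v₁ v₂ c hv₁ hv₂ hc
end

section
/- Suppose μ((0,1)) > 0. Then for every m ≥ 1, the m×m symmetric tridiagonal Toeplitz matrix K̂ with all diagonal entries equal to v₁ + v₂, all entries on the sub- and super-diagonal equal to c, and all other entries 0, is positive definite; in particular it is invertible. -/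
open MeasureTheory

/-- The `m × m` symmetric tridiagonal Toeplitz matrix with diagonal entries `v₁ + v₂`,
sub- and super-diagonal entries `c`, and `0` elsewhere. -/
def Khat (m : ℕ) (v₁ v₂ c : ℝ) : Matrix (Fin m) (Fin m) ℝ := fun i j =>
  if i = j then v₁ + v₂
  else if (i : ℕ) + 1 = (j : ℕ) ∨ (j : ℕ) + 1 = (i : ℕ) then c else 0

/-!
Write `F s = μ [0, s]` and `G s = μ [s, 1]`. Then `c ≥ 0`, `v₁ + v₂ - 2c = ∫ (G - F)² ≥ 0`, and
`F + G ≥ μ [0, 1] = 1` on `[0, 1]` gives `v₁ + v₂ ≥ 1/2`.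

On the matrix side, `K̂ = (v₁ + v₂ - 2c) • 1 + c • BᵀB`, where `B` is the incidence matrix of the
path with `m + 1` vertices and `m` edges. Since `Bx = 0` forces `x₀ = 0` and `xₖ + xₖ₊₁ = 0`,
`B` is injective, so `BᵀB` is positive definite, and so is `K̂` as soon as `v₁ + v₂ > 0`.
-/

open Set Matrix

section Integrals

theorem measureReal_Icc_le_add (μ : Measure ℝ) {a b s : ℝ} (hs : s ∈ Icc a b) :
    μ.real (Icc a b) ≤ μ.real (Icc a s) + μ.real (Icc s b) := by
  rw [← Icc_union_Icc_eq_Icc hs.1 hs.2]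
  exact measureReal_union_le _ _

variable (μ : Measure ℝ) [IsFiniteMeasure μ] (a b : ℝ)

theorem integrableOn_Icc_measureReal_mul {p q : ℝ → Set ℝ}
    (hp : Measurable fun s => μ.real (p s)) (hq : Measurable fun s => μ.real (q s)) :
    IntegrableOn (fun s => μ.real (p s) * μ.real (q s)) (Icc a b) := by
  have hbound : ∀ r : Set ℝ, ‖μ.real r‖ ≤ μ.real univ := fun r =>
    (Real.norm_of_nonneg measureReal_nonneg).trans_le (measureReal_mono (subset_univ r))
  refine Measure.integrableOn_of_bounded (M := μ.real univ * μ.real univ) (by simp)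
    (hp.mul hq).aestronglyMeasurable (ae_of_all _ fun s => ?_)
  rw [norm_mul]
  exact mul_le_mul (hbound _) (hbound _) (norm_nonneg _) measureReal_nonneg

theorem measurable_measureReal_Icc_left : Measurable fun s => μ.real (Icc a s) :=
  Monotone.measurable fun _ _ h => measureReal_mono (Icc_subset_Icc_right h)

theorem measurable_measureReal_Icc_right : Measurable fun s => μ.real (Icc s b) :=
  Antitone.measurable fun _ _ h => measureReal_mono (Icc_subset_Icc_left h)

theorem integrableOn_Icc_measureReal_Icc_sq_add_sq :
    IntegrableOn (fun s => μ.real (Icc s b) ^ 2 + μ.real (Icc a s) ^ 2) (Icc a b) := by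
  simp only [sq]
  exact (integrableOn_Icc_measureReal_mul μ a b (measurable_measureReal_Icc_right μ b)
      (measurable_measureReal_Icc_right μ b)).add
    (integrableOn_Icc_measureReal_mul μ a b (measurable_measureReal_Icc_left μ a)
      (measurable_measureReal_Icc_left μ a))

theorem setIntegral_measureReal_Icc_sq_add_sq :
    (∫ s in Icc a b, μ.real (Icc s b) ^ 2) + ∫ s in Icc a b, μ.real (Icc a s) ^ 2 =
      ∫ s in Icc a b, (μ.real (Icc s b) ^ 2 + μ.real (Icc a s) ^ 2) := by
  simp only [sq]
  exact (integral_add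
    (integrableOn_Icc_measureReal_mul μ a b (measurable_measureReal_Icc_right μ b)
      (measurable_measureReal_Icc_right μ b))
    (integrableOn_Icc_measureReal_mul μ a b (measurable_measureReal_Icc_left μ a)
      (measurable_measureReal_Icc_left μ a))).symm

theorem two_mul_setIntegral_measureReal_Icc_mul_le :
    2 * ∫ s in Icc a b, μ.real (Icc a s) * μ.real (Icc s b) ≤
      (∫ s in Icc a b, μ.real (Icc s b) ^ 2) + ∫ s in Icc a b, μ.real (Icc a s) ^ 2 := by
  rw [setIntegral_measureReal_Icc_sq_add_sq, ← integral_const_mul]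
  refine setIntegral_mono ((integrableOn_Icc_measureReal_mul μ a b
    (measurable_measureReal_Icc_left μ a) (measurable_measureReal_Icc_right μ b)).const_mul 2)
    (integrableOn_Icc_measureReal_Icc_sq_add_sq μ a b) fun s => ?_
  linarith [two_mul_le_add_sq (μ.real (Icc a s)) (μ.real (Icc s b))]

theorem measureReal_Icc_sq_div_two_mul_le_setIntegral (hab : a ≤ b) :
    μ.real (Icc a b) ^ 2 / 2 * (b - a) ≤
      (∫ s in Icc a b, μ.real (Icc s b) ^ 2) + ∫ s in Icc a b, μ.real (Icc a s) ^ 2 := by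
  rw [setIntegral_measureReal_Icc_sq_add_sq, ← Real.volume_real_Icc_of_le hab]
  refine setIntegral_ge_of_const_le_real measurableSet_Icc (by simp) (fun s hs => ?_)
    (integrableOn_Icc_measureReal_Icc_sq_add_sq μ a b)
  nlinarith [measureReal_Icc_le_add μ hs, measureReal_nonneg (μ := μ) (s := Icc a b),
    sq_nonneg (μ.real (Icc s b) - μ.real (Icc a s))]

end Integrals

def pathIncidence (m : ℕ) : Matrix (Fin (m + 1)) (Fin m) ℝ := fun k j =>
  (if k = j.castSucc then 1 else 0) + (if k = j.succ then 1 else 0)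

theorem conjTranspose_pathIncidence_mul_self (m : ℕ) :
    (pathIncidence m)ᴴ * pathIncidence m = Khat m 1 1 1 := by
  ext i j
  simp only [conjTranspose_eq_transpose_of_trivial, mul_apply, transpose_apply, pathIncidence,
    mul_add, mul_ite, mul_one, mul_zero, Finset.sum_add_distrib, Finset.sum_ite_eq',
    Finset.mem_univ, ↓reduceIte, Fin.castSucc_inj, Fin.succ_inj, Khat]
  simp only [Fin.ext_iff, Fin.val_castSucc, Fin.val_succ]
  split_ifs <;> first | omega | norm_num

theorem pathIncidence_mulVec_zero {n : ℕ} (x : Fin (n + 1) → ℝ) :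
    (pathIncidence (n + 1) *ᵥ x) 0 = x 0 := by
  simp [mulVec, dotProduct, pathIncidence, eq_comm (a := (0 : Fin (n + 2)))]

theorem pathIncidence_mulVec_succ_castSucc {n : ℕ} (x : Fin (n + 1) → ℝ) (k : Fin n) :
    (pathIncidence (n + 1) *ᵥ x) k.succ.castSucc = x k.castSucc + x k.succ := by
  have hk : ∀ j : Fin (n + 1), k.castSucc.succ = j.castSucc ↔ j = k.succ := by
    simp [Fin.ext_iff, eq_comm]
  simp [mulVec, dotProduct, pathIncidence, add_mul, Finset.sum_add_distrib, hk, add_comm]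

theorem pathIncidence_mulVec_injective (m : ℕ) : Function.Injective (pathIncidence m).mulVec := by
  refine (injective_iff_map_eq_zero (pathIncidence m).mulVecLin).2 fun x hx => ?_
  cases m with
  | zero => exact Subsingleton.elim _ _
  | succ n =>
    funext j
    induction j using Fin.induction with
    | zero => simpa [pathIncidence_mulVec_zero] using congrFun hx 0
    | succ k ih =>
      have hk := congrFun hx k.succ.castSucc
      rw [mulVecLin_apply, pathIncidence_mulVec_succ_castSucc, ih] at hk
      simpa using hk

theorem Khat_eq_smul_one_add_smul (m : ℕ) (v₁ v₂ c : ℝ) :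
    Khat m v₁ v₂ c = (v₁ + v₂ - 2 * c) • 1 + c • Khat m 1 1 1 := by
  ext i j
  simp only [Khat, Matrix.add_apply, Matrix.smul_apply, one_apply, smul_eq_mul]
  split_ifs <;> ring

theorem posDef_Khat {m : ℕ} {v₁ v₂ c : ℝ} (hc : 0 ≤ c) (hcd : 2 * c ≤ v₁ + v₂)
    (hd : 0 < v₁ + v₂) : (Khat m v₁ v₂ c).PosDef := by
  rw [Khat_eq_smul_one_add_smul, ← conjTranspose_pathIncidence_mul_self]
  rcases hc.eq_or_lt with rfl | hc
  · simpa using PosDef.one.smul hd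
  · exact .posSemidef_add (PosSemidef.one.smul (sub_nonneg.2 hcd))
      ((PosDef.conjTranspose_mul_self _ (pathIncidence_mulVec_injective m)).smul hc)

theorem Khat_posDef_general
    (μ : Measure ℝ) [IsProbabilityMeasure μ] (hμsupp : μ (Set.Icc (0 : ℝ) 1)ᶜ = 0)
    (v₁ v₂ c : ℝ)
    (hv₁ : v₁ = ∫ s in Set.Icc (0 : ℝ) 1, ((μ (Set.Icc s 1)).toReal) ^ 2)
    (hv₂ : v₂ = ∫ s in Set.Icc (0 : ℝ) 1, ((μ (Set.Icc 0 s)).toReal) ^ 2)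
    (hc : c = ∫ s in Set.Icc (0 : ℝ) 1, (μ (Set.Icc 0 s)).toReal * (μ (Set.Icc s 1)).toReal)
    (m : ℕ) :
    (Khat m v₁ v₂ c).PosDef ∧ IsUnit (Khat m v₁ v₂ c).det := by
  simp only [← measureReal_def] at hv₁ hv₂ hc
  have hμ : μ.real (Icc 0 1) = 1 := by
    simp [measureReal_def, (prob_compl_eq_zero_iff measurableSet_Icc).1 hμsupp]
  have hc₀ : 0 ≤ c := hc ▸ setIntegral_nonneg measurableSet_Icc fun s _ => by positivity
  have hcd : 2 * c ≤ v₁ + v₂ := by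
    subst hv₁ hv₂ hc
    exact two_mul_setIntegral_measureReal_Icc_mul_le μ 0 1
  have hd : 1 / 2 ≤ v₁ + v₂ := by
    subst hv₁ hv₂
    simpa [hμ, one_div] using measureReal_Icc_sq_div_two_mul_le_setIntegral μ 0 1 zero_le_one
  have hK : (Khat m v₁ v₂ c).PosDef := posDef_Khat hc₀ hcd (by linarith)
  exact ⟨hK, (isUnit_iff_isUnit_det _).1 hK.isUnit⟩

/-- if `μ` is a probability measure on `[0,1]` with `μ((0,1)) > 0` then, with
`v₁ = ∫₀¹ μ([s,1])² ds`, `v₂ = ∫₀¹ μ([0,s])² ds` and `c = ∫₀¹ μ([0,s])μ([s,1]) ds`, for every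
`m ≥ 1` the tridiagonal Toeplitz matrix `K̂` is positive definite, and in particular
invertible. -/
theorem Khat_posDef
    (μ : Measure ℝ) [IsProbabilityMeasure μ] (hμsupp : μ (Set.Icc (0 : ℝ) 1)ᶜ = 0)
    (hμ : 0 < μ (Set.Ioo (0 : ℝ) 1))
    (v₁ v₂ c : ℝ)
    (hv₁ : v₁ = ∫ s in Set.Icc (0 : ℝ) 1, ((μ (Set.Icc s 1)).toReal) ^ 2)
    (hv₂ : v₂ = ∫ s in Set.Icc (0 : ℝ) 1, ((μ (Set.Icc 0 s)).toReal) ^ 2)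
    (hc : c = ∫ s in Set.Icc (0 : ℝ) 1, (μ (Set.Icc 0 s)).toReal * (μ (Set.Icc s 1)).toReal)
    (m : ℕ) (hm : 1 ≤ m) :
    (Khat m v₁ v₂ c).PosDef ∧ IsUnit (Khat m v₁ v₂ c).det :=
  Khat_posDef_general μ hμsupp v₁ v₂ c hv₁ hv₂ hc m
end

section
/- Define ξ = 2(W_{1/2} − (1/2)W_1) and, for t ∈ [0,1], W**_t = (W_t − t·W_1) − ξ·min(t, 1−t). Then for all s, t ∈ [0,1], E[W**_s W**_t] = min(s,t) − s·t − min(s,1−s)·min(t,1−t). In particular, E[W**_s W**_t] = 0 whenever s ≤ 1/2 ≤ t, and E[W**_s W**_t] = min(s,t) − 2·s·t whenever s, t ∈ [0,1/2]. -/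
open MeasureTheory ProbabilityTheory

/-!
Substituting `ξ`, `W**_t = W_t + (η t - t) W_1 - 2 η t W_{1/2}` is a linear combination of
values of `W`, which are centered with `cov[W_s, W_t] = min s t` (by polarization,
`Var[W_s + W_t] = s + t + 2 min s t`). Bilinearity of the covariance turns `E[W**_s W**_t]` into
a `3 × 3` sum of minima, which collapses to the claimed kernel once `min u (1/2)` is written as
`(u + η u) / 2`.
-/

/-- `W` is a standard one-dimensional Brownian motion under `P`: it has continuous paths,
starts at `0`, each `W t` is measurable, and its finite-dimensional distributions are
centered Gaussian with covariance `E[W_s W_t] = min s t`. -/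
def IsBrownianMotion {Ω : Type*} [MeasurableSpace Ω] (P : Measure Ω) (W : ℝ → Ω → ℝ) : Prop :=
  (∀ ω, Continuous fun t => W t ω) ∧ (∀ ω, W 0 ω = 0) ∧ (∀ t, Measurable (W t)) ∧
  ∀ (n : ℕ) (t : Fin n → ℝ), (∀ i, 0 ≤ t i) → ∀ c : Fin n → ℝ,
    Measure.map (fun ω => ∑ i, c i * W (t i) ω) P =
      gaussianReal 0 (Real.toNNReal (∑ i, ∑ j, c i * c j * min (t i) (t j)))

lemma integral_mul_eq_covariance {Ω : Type*} [MeasurableSpace Ω] {μ : Measure Ω}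
    [IsProbabilityMeasure μ] {X Y : Ω → ℝ} (hX : MemLp X 2 μ) (hY : MemLp Y 2 μ)
    (hX₀ : μ[X] = 0) : ∫ ω, X ω * Y ω ∂μ = cov[X, Y; μ] := by
  rw [covariance_eq_sub hX hY, hX₀, zero_mul, sub_zero, Pi.mul_def]

namespace IsBrownianMotion

variable {Ω : Type*} [MeasurableSpace Ω] {P : Measure Ω} {W : ℝ → Ω → ℝ}

lemma hasLaw_eval (hW : IsBrownianMotion P W) {t : ℝ} (ht : 0 ≤ t) :
    HasLaw (W t) (gaussianReal 0 t.toNNReal) P where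
  aemeasurable := (hW.2.2.1 t).aemeasurable
  map_eq := by simpa using hW.2.2.2 1 ![t] (fun _ ↦ by simpa) ![1]

lemma hasLaw_add_eval (hW : IsBrownianMotion P W) {s t : ℝ} (hs : 0 ≤ s) (ht : 0 ≤ t) :
    HasLaw (W s + W t) (gaussianReal 0 (s + t + 2 * min s t).toNNReal) P where
  aemeasurable := ((hW.2.2.1 s).add (hW.2.2.1 t)).aemeasurable
  map_eq := by
    have h := hW.2.2.2 2 ![s, t] (fun i ↦ by fin_cases i <;> assumption) ![1, 1]
    simp only [Fin.sum_univ_two, Matrix.cons_val_zero, Matrix.cons_val_one, one_mul,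
      min_self, min_comm t s] at h
    rw [show s + t + 2 * min s t = s + min s t + (min s t + t) by ring]
    exact h

lemma isProbabilityMeasure (hW : IsBrownianMotion P W) : IsProbabilityMeasure P :=
  (hW.hasLaw_eval le_rfl).isProbabilityMeasure

lemma memLp_eval (hW : IsBrownianMotion P W) {t : ℝ} (ht : 0 ≤ t) : MemLp (W t) 2 P :=
  (hW.hasLaw_eval ht).hasGaussianLaw.memLp_two

lemma integral_eval (hW : IsBrownianMotion P W) {t : ℝ} (ht : 0 ≤ t) : P[W t] = 0 := by
  rw [(hW.hasLaw_eval ht).integral_eq, integral_id_gaussianReal]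

lemma variance_eval (hW : IsBrownianMotion P W) {t : ℝ} (ht : 0 ≤ t) : Var[W t; P] = t := by
  rw [(hW.hasLaw_eval ht).variance_eq, variance_id_gaussianReal, Real.coe_toNNReal _ ht]

lemma covariance_eval (hW : IsBrownianMotion P W) {s t : ℝ} (hs : 0 ≤ s) (ht : 0 ≤ t) :
    cov[W s, W t; P] = min s t := by
  have := hW.isProbabilityMeasure
  have hsum := variance_add (hW.memLp_eval hs) (hW.memLp_eval ht)
  rw [(hW.hasLaw_add_eval hs ht).variance_eq, variance_id_gaussianReal,
    Real.coe_toNNReal _ (by positivity), hW.variance_eval hs, hW.variance_eval ht] at hsum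
  linarith

lemma integral_sum_mul_sum {ι κ : Type*} [Fintype ι] [Fintype κ] (hW : IsBrownianMotion P W)
    {t : ι → ℝ} {u : κ → ℝ} (ht : ∀ i, 0 ≤ t i) (hu : ∀ j, 0 ≤ u j) (c : ι → ℝ) (d : κ → ℝ) :
    ∫ ω, (∑ i, c i * W (t i) ω) * (∑ j, d j * W (u j) ω) ∂P =
      ∑ i, ∑ j, c i * d j * min (t i) (u j) := by
  have := hW.isProbabilityMeasure
  have hX : ∀ i, MemLp (fun ω ↦ c i * W (t i) ω) 2 P := fun i ↦ (hW.memLp_eval (ht i)).const_mul _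
  have hY : ∀ j, MemLp (fun ω ↦ d j * W (u j) ω) 2 P := fun j ↦ (hW.memLp_eval (hu j)).const_mul _
  have hmean : ∫ ω, ∑ i, c i * W (t i) ω ∂P = 0 := by
    rw [integral_finsetSum _ fun i _ ↦ (hX i).integrable one_le_two]
    simp [integral_const_mul, hW.integral_eval (ht _)]
  rw [integral_mul_eq_covariance (memLp_finsetSum _ fun i _ ↦ hX i)
    (memLp_finsetSum _ fun j _ ↦ hY j) hmean, covariance_fun_sum_fun_sum hX hY]
  simp_rw [covariance_const_mul_left, covariance_const_mul_right,
    hW.covariance_eval (ht _) (hu _), mul_assoc]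

end IsBrownianMotion

def bridgeRemainderCoeff (t : ℝ) : Fin 3 → ℝ := ![1, min t (1 - t) - t, -(2 * min t (1 - t))]

noncomputable def bridgeRemainderTimes (t : ℝ) : Fin 3 → ℝ := ![t, 1, 1 / 2]

lemma bridgeRemainderTimes_nonneg {t : ℝ} (ht : 0 ≤ t) (i : Fin 3) :
    0 ≤ bridgeRemainderTimes t i := by
  fin_cases i <;> simp [bridgeRemainderTimes, ht]

lemma sum_bridgeRemainderCoeff_mul (w : ℝ → ℝ) (t : ℝ) :
    ∑ i, bridgeRemainderCoeff t i * w (bridgeRemainderTimes t i) =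
      (w t - t * w 1) - 2 * (w (1 / 2) - 1 / 2 * w 1) * min t (1 - t) := by
  simp only [Fin.sum_univ_three, bridgeRemainderCoeff, bridgeRemainderTimes, Matrix.cons_val_zero,
    Matrix.cons_val_one, Matrix.cons_val_two, Matrix.head_cons, Matrix.tail_cons]
  ring

lemma min_one_half_eq (u : ℝ) : min u (1 / 2) = (u + min u (1 - u)) / 2 := by
  rcases le_total u (1 / 2) with h | h
  · rw [min_eq_left h, min_eq_left (by linarith)]; ring
  · rw [min_eq_right h, min_eq_right (by linarith)]; ring

lemma sum_sum_bridgeRemainderCoeff_mul_min {s t : ℝ} (hs : s ≤ 1) (ht : t ≤ 1) :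
    ∑ i, ∑ j, bridgeRemainderCoeff s i * bridgeRemainderCoeff t j *
        min (bridgeRemainderTimes s i) (bridgeRemainderTimes t j) =
      min s t - s * t - min s (1 - s) * min t (1 - t) := by
  simp only [Fin.sum_univ_three, bridgeRemainderCoeff, bridgeRemainderTimes, Matrix.cons_val_zero,
    Matrix.cons_val_one, Matrix.cons_val_two, Matrix.head_cons, Matrix.tail_cons]
  rw [min_eq_left hs, min_eq_right ht, min_self, min_eq_right (by norm_num : (1 : ℝ) / 2 ≤ 1),
    min_eq_left (by norm_num : (1 : ℝ) / 2 ≤ 1), min_self, min_one_half_eq s, min_comm (1 / 2) t,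
    min_one_half_eq t]
  ring

theorem brownian_bridge_remainder_covariance_general
    {Ω : Type*} [MeasurableSpace Ω] (P : Measure Ω)
    (W : ℝ → Ω → ℝ) (hW : IsBrownianMotion P W)
    (ξ : Ω → ℝ) (hξ : ∀ ω, ξ ω = 2 * (W (1 / 2) ω - (1 / 2) * W 1 ω))
    (Wss : ℝ → Ω → ℝ)
    (hWss : ∀ t ∈ Set.Icc (0 : ℝ) 1, ∀ ω,
      Wss t ω = (W t ω - t * W 1 ω) - ξ ω * min t (1 - t)) :
    (∀ s ∈ Set.Icc (0 : ℝ) 1, ∀ t ∈ Set.Icc (0 : ℝ) 1,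
      ∫ ω, Wss s ω * Wss t ω ∂P = min s t - s * t - min s (1 - s) * min t (1 - t)) ∧
    (∀ s ∈ Set.Icc (0 : ℝ) 1, ∀ t ∈ Set.Icc (0 : ℝ) 1, s ≤ 1 / 2 → 1 / 2 ≤ t →
      ∫ ω, Wss s ω * Wss t ω ∂P = 0) ∧
    (∀ s ∈ Set.Icc (0 : ℝ) (1 / 2), ∀ t ∈ Set.Icc (0 : ℝ) (1 / 2),
      ∫ ω, Wss s ω * Wss t ω ∂P = min s t - 2 * s * t) := by
  have hWss_eq_sum : ∀ t ∈ Set.Icc (0 : ℝ) 1,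
      Wss t = fun ω ↦ ∑ i, bridgeRemainderCoeff t i * W (bridgeRemainderTimes t i) ω := by
    intro t ht
    ext ω
    rw [hWss t ht, hξ, sum_bridgeRemainderCoeff_mul (W · ω)]
  have hcov : ∀ s ∈ Set.Icc (0 : ℝ) 1, ∀ t ∈ Set.Icc (0 : ℝ) 1,
      ∫ ω, Wss s ω * Wss t ω ∂P = min s t - s * t - min s (1 - s) * min t (1 - t) := by
    intro s hs t ht
    rw [hWss_eq_sum s hs, hWss_eq_sum t ht, hW.integral_sum_mul_sum
      (bridgeRemainderTimes_nonneg hs.1) (bridgeRemainderTimes_nonneg ht.1),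
      sum_sum_bridgeRemainderCoeff_mul_min hs.2 ht.2]
  refine ⟨hcov, fun s hs t ht hs₂ ht₂ ↦ ?_, fun s hs t ht ↦ ?_⟩
  · rw [hcov s hs t ht, min_eq_left (hs₂.trans ht₂), min_eq_left (by linarith : s ≤ 1 - s),
      min_eq_right (by linarith : 1 - t ≤ t)]
    ring
  · rw [hcov s ⟨hs.1, by linarith [hs.2]⟩ t ⟨ht.1, by linarith [ht.2]⟩,
      min_eq_left (by linarith [hs.2] : s ≤ 1 - s), min_eq_left (by linarith [ht.2] : t ≤ 1 - t)]
    ring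

/-- with `ξ = 2(W_{1/2} − W_1/2)` and
`W**_t = (W_t − t W_1) − ξ min(t, 1−t)`, for all `s, t ∈ [0,1]`,
`E[W**_s W**_t] = min(s,t) − s t − min(s,1−s) min(t,1−t)`. In particular
`E[W**_s W**_t] = 0` whenever `s ≤ 1/2 ≤ t`, and `E[W**_s W**_t] = min(s,t) − 2 s t`
whenever `s, t ∈ [0,1/2]`. -/
theorem brownian_bridge_remainder_covariance
    {Ω : Type*} [MeasurableSpace Ω] (P : Measure Ω) [IsProbabilityMeasure P]
    (W : ℝ → Ω → ℝ) (hW : IsBrownianMotion P W)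
    (ξ : Ω → ℝ) (hξ : ∀ ω, ξ ω = 2 * (W (1 / 2) ω - (1 / 2) * W 1 ω))
    (Wss : ℝ → Ω → ℝ)
    (hWss : ∀ t ∈ Set.Icc (0 : ℝ) 1, ∀ ω,
      Wss t ω = (W t ω - t * W 1 ω) - ξ ω * min t (1 - t)) :
    (∀ s ∈ Set.Icc (0 : ℝ) 1, ∀ t ∈ Set.Icc (0 : ℝ) 1,
      ∫ ω, Wss s ω * Wss t ω ∂P = min s t - s * t - min s (1 - s) * min t (1 - t)) ∧
    (∀ s ∈ Set.Icc (0 : ℝ) 1, ∀ t ∈ Set.Icc (0 : ℝ) 1, s ≤ 1 / 2 → 1 / 2 ≤ t →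
      ∫ ω, Wss s ω * Wss t ω ∂P = 0) ∧
    (∀ s ∈ Set.Icc (0 : ℝ) (1 / 2), ∀ t ∈ Set.Icc (0 : ℝ) (1 / 2),
      ∫ ω, Wss s ω * Wss t ω ∂P = min s t - 2 * s * t) :=
  brownian_bridge_remainder_covariance_general P W hW ξ hξ Wss hWss
end

section
/- Let n ≥ 1 and let μ be a probability measure on [0,1] with μ((0,1)) > 0. Let B be a standard Brownian motion and define the local means G'_i = ∫₀¹ B_{(s+i)/n} dμ(s) for i = 0, …, n−1. Then the covariance matrix (E[G'_i G'_j])_{0≤i,j≤n−1}, whose entries are E[G'_i G'_j] = (1/n) ∫₀¹ ∫₀¹ min(s+i, t+j) dμ(s) dμ(t), is positive definite; in particular it is invertible. -/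
/-!
For a Brownian motion `E[B_a B_b] = min a b` (polarization of the Gaussian second moments), so
by Fubini `E[G'_i G'_j] = (1/n) ∬ min(s+i, t+j) dμ(s) dμ(t)`. With `F w = μ [w, ∞)` and
`min a b = ∫₀ⁿ 1{u ≤ a} 1{u ≤ b} du` for `a, b ∈ [0, n]`, a second Fubini step makes this
`(1/n) ∫₀ⁿ F(u - i) F(u - j) du`, a Gram matrix in `L²(0, n]`. It is positive definite because the
translates `F(· - i)` are linearly independent: `F` vanishes on `(1, ∞)` but, as `μ (0,1) > 0`, not
just to the right of `0`.
-/

open MeasureTheory ProbabilityTheory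

open Set Filter Topology
open scoped NNReal ENNReal

namespace ProbabilityTheory

variable {Ω : Type*} [MeasurableSpace Ω] {P : Measure Ω}

lemma HasLaw.memLp_of_gaussianReal {X : Ω → ℝ} {m : ℝ} {v : ℝ≥0}
    (hX : HasLaw X (gaussianReal m v) P) (p : ℝ≥0) : MemLp X p P :=
  (memLp_map_measure_iff aestronglyMeasurable_id hX.aemeasurable).1
    (hX.map_eq ▸ memLp_id_gaussianReal p)

lemma HasLaw.integral_sq_of_gaussianReal_zero {X : Ω → ℝ} {v : ℝ≥0}
    (hX : HasLaw X (gaussianReal 0 v) P) : ∫ ω, X ω ^ 2 ∂P = v := by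
  have hmean : P[X] = 0 := by rw [hX.integral_eq, integral_id_gaussianReal]
  rw [← variance_of_integral_eq_zero hX.aemeasurable hmean, hX.variance_eq,
    variance_id_gaussianReal]

end ProbabilityTheory

namespace IsBrownianMotion

variable {Ω : Type*} [MeasurableSpace Ω] {P : Measure Ω} {B : ℝ → Ω → ℝ}

lemma measurable_uncurry (hB : IsBrownianMotion P B) : Measurable (Function.uncurry B) :=
  measurable_uncurry_of_continuous_of_measurable hB.1 hB.2.2.1

lemma hasLaw (hB : IsBrownianMotion P B) {t : ℝ} (ht : 0 ≤ t) :
    HasLaw (B t) (gaussianReal 0 t.toNNReal) P where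
  aemeasurable := (hB.2.2.1 t).aemeasurable
  map_eq := by simpa using hB.2.2.2 1 (fun _ => t) (fun _ => ht) (fun _ => 1)

lemma hasLaw_add (hB : IsBrownianMotion P B) {a b : ℝ} (ha : 0 ≤ a) (hb : 0 ≤ b) :
    HasLaw (fun ω => B a ω + B b ω) (gaussianReal 0 (a + b + 2 * min a b).toNNReal) P where
  aemeasurable := ((hB.2.2.1 a).add (hB.2.2.1 b)).aemeasurable
  map_eq := by
    convert hB.2.2.2 2 ![a, b] (fun i => by fin_cases i <;> assumption) (fun _ => 1) using 3
    · simp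
    · simp [min_comm b a]
      ring

lemma memLp_two (hB : IsBrownianMotion P B) {t : ℝ} (ht : 0 ≤ t) : MemLp (B t) 2 P :=
  (hB.hasLaw ht).memLp_of_gaussianReal 2

lemma integral_sq (hB : IsBrownianMotion P B) {t : ℝ} (ht : 0 ≤ t) :
    ∫ ω, B t ω ^ 2 ∂P = t := by
  rw [(hB.hasLaw ht).integral_sq_of_gaussianReal_zero, Real.coe_toNNReal _ ht]

lemma integrable_mul (hB : IsBrownianMotion P B) {a b : ℝ} (ha : 0 ≤ a) (hb : 0 ≤ b) :
    Integrable (fun ω => B a ω * B b ω) P :=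
  (hB.memLp_two ha).integrable_mul (hB.memLp_two hb)

lemma integral_mul (hB : IsBrownianMotion P B) {a b : ℝ} (ha : 0 ≤ a) (hb : 0 ≤ b) :
    ∫ ω, B a ω * B b ω ∂P = min a b := by
  have hsum := (hB.hasLaw_add ha hb).integral_sq_of_gaussianReal_zero
  rw [Real.coe_toNNReal _ (by positivity)] at hsum
  have hsq : ∀ t, 0 ≤ t → Integrable (fun ω => B t ω ^ 2) P := fun t ht =>
    (hB.memLp_two ht).integrable_sq
  have hsum_sq : Integrable (fun ω => (B a ω + B b ω) ^ 2) P :=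
    ((hB.hasLaw_add ha hb).memLp_of_gaussianReal 2).integrable_sq
  have hexp : ∀ ω, B a ω * B b ω = ((B a ω + B b ω) ^ 2 - B a ω ^ 2 - B b ω ^ 2) / 2 :=
    fun ω => by ring
  simp_rw [hexp]
  rw [integral_div, integral_sub (f := fun ω => (B a ω + B b ω) ^ 2 - B a ω ^ 2)
      (hsum_sq.sub (hsq a ha)) (hsq b hb),
    integral_sub hsum_sq (hsq a ha), hsum, hB.integral_sq ha, hB.integral_sq hb]
  ring

lemma integral_abs_mul_le (hB : IsBrownianMotion P B) {a b : ℝ} (ha : 0 ≤ a) (hb : 0 ≤ b) :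
    ∫ ω, |B a ω * B b ω| ∂P ≤ (a + b) / 2 := by
  have hsq : ∀ t, 0 ≤ t → Integrable (fun ω => B t ω ^ 2) P := fun t ht =>
    (hB.memLp_two ht).integrable_sq
  calc ∫ ω, |B a ω * B b ω| ∂P ≤ ∫ ω, (B a ω ^ 2 + B b ω ^ 2) / 2 ∂P := by
        refine integral_mono (hB.integrable_mul ha hb).abs
          (((hsq a ha).add (hsq b hb)).div_const 2) fun ω => ?_
        have := two_mul_le_add_sq |B a ω| |B b ω|
        rw [sq_abs, sq_abs] at this
        simp only [abs_mul]
        linarith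
    _ = (a + b) / 2 := by
        rw [integral_div, integral_add (hsq a ha) (hsq b hb), hB.integral_sq ha, hB.integral_sq hb]

variable {α β : Type*} [MeasurableSpace α] [MeasurableSpace β] {μ : Measure α} {ν : Measure β}
  [IsFiniteMeasure μ] [IsFiniteMeasure ν] {f : α → ℝ} {g : β → ℝ} {T : ℝ}

lemma integrable_mul_prod [SFinite P] (hB : IsBrownianMotion P B) (hf : Measurable f)
    (hg : Measurable g) (hfT : ∀ᵐ s ∂μ, f s ∈ Icc 0 T) (hgT : ∀ᵐ t ∂ν, g t ∈ Icc 0 T) :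
    Integrable (fun q : Ω × (α × β) => B (f q.2.1) q.1 * B (g q.2.2) q.1) (P.prod (μ.prod ν)) := by
  have hK : Measurable (fun q : Ω × (α × β) => B (f q.2.1) q.1 * B (g q.2.2) q.1) :=
    (hB.measurable_uncurry.comp ((hf.comp measurable_snd.fst).prodMk measurable_fst)).mul
      (hB.measurable_uncurry.comp ((hg.comp measurable_snd.snd).prodMk measurable_fst))
  have hae := (Measure.quasiMeasurePreserving_fst.ae hfT).and
    (Measure.quasiMeasurePreserving_snd.ae hgT)
  rw [integrable_prod_iff' hK.aestronglyMeasurable]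
  refine ⟨hae.mono fun p hp => hB.integrable_mul hp.1.1 hp.2.1,
    (integrable_const T).mono' ?_ (hae.mono fun p hp => ?_)⟩
  · exact (StronglyMeasurable.integral_prod_left (f := fun ω (p : α × β) =>
      ‖B (f p.1) ω * B (g p.2) ω‖) hK.norm.stronglyMeasurable).aestronglyMeasurable
  · rw [Real.norm_of_nonneg (integral_nonneg fun _ => norm_nonneg _)]
    simp only [Real.norm_eq_abs]
    linarith [hB.integral_abs_mul_le hp.1.1 hp.2.1, hp.1.2, hp.2.2]

theorem integral_mul_integral [SFinite P] (hB : IsBrownianMotion P B) (hf : Measurable f)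
    (hg : Measurable g) (hfT : ∀ᵐ s ∂μ, f s ∈ Icc 0 T) (hgT : ∀ᵐ t ∂ν, g t ∈ Icc 0 T) :
    ∫ ω, (∫ s, B (f s) ω ∂μ) * (∫ t, B (g t) ω ∂ν) ∂P = ∫ p, min (f p.1) (g p.2) ∂(μ.prod ν) := by
  have hae := (Measure.quasiMeasurePreserving_fst.ae hfT).and
    (Measure.quasiMeasurePreserving_snd.ae hgT)
  calc ∫ ω, (∫ s, B (f s) ω ∂μ) * (∫ t, B (g t) ω ∂ν) ∂P
      = ∫ ω, ∫ p, B (f p.1) ω * B (g p.2) ω ∂(μ.prod ν) ∂P := by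
        congr with ω
        exact (integral_prod_mul _ _).symm
    _ = ∫ p, ∫ ω, B (f p.1) ω * B (g p.2) ω ∂P ∂(μ.prod ν) :=
        integral_integral_swap (hB.integrable_mul_prod hf hg hfT hgT)
    _ = ∫ p, min (f p.1) (g p.2) ∂(μ.prod ν) :=
        integral_congr_ae (hae.mono fun p hp => hB.integral_mul hp.1.1 hp.2.1)

end IsBrownianMotion

lemma min_eq_setIntegral_indicator_Iic {a b T : ℝ} (ha : 0 ≤ a) (hb : 0 ≤ b) (haT : a ≤ T) :
    min a b = ∫ u in Ioc 0 T, (Iic (min a b)).indicator 1 u := by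
  rw [integral_indicator_one measurableSet_Iic, measureReal_restrict_apply measurableSet_Iic,
    Iic_inter_Ioc_of_le ((min_le_left a b).trans haT), Real.volume_real_Ioc_of_le (le_min ha hb),
    sub_zero]

section LayerCake

variable {α β : Type*} [MeasurableSpace α] [MeasurableSpace β] {μ : Measure α} {ν : Measure β}
  [IsFiniteMeasure μ] [IsFiniteMeasure ν] {f : α → ℝ} {g : β → ℝ} {T : ℝ}

lemma integral_min_prod_eq_integral_integral (hf : Measurable f) (hg : Measurable g)
    (hfT : ∀ᵐ s ∂μ, f s ∈ Icc 0 T) (hgT : ∀ᵐ t ∂ν, g t ∈ Icc 0 T) :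
    ∫ p, min (f p.1) (g p.2) ∂(μ.prod ν) = ∫ t, ∫ s, min (f s) (g t) ∂μ ∂ν := by
  refine integral_prod_symm _ ((integrable_const T).mono'
    ((hf.comp measurable_fst).min (hg.comp measurable_snd)).aestronglyMeasurable ?_)
  filter_upwards [Measure.quasiMeasurePreserving_fst.ae hfT,
    Measure.quasiMeasurePreserving_snd.ae hgT] with p hp₁ hp₂
  rw [Real.norm_of_nonneg (le_min hp₁.1 hp₂.1)]
  exact (min_le_left _ _).trans hp₁.2

theorem integral_min_prod_eq_setIntegral (hf : Measurable f) (hg : Measurable g)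
    (hfT : ∀ᵐ s ∂μ, f s ∈ Icc 0 T) (hgT : ∀ᵐ t ∂ν, g t ∈ Icc 0 T) :
    ∫ p, min (f p.1) (g p.2) ∂(μ.prod ν) =
      ∫ u in Ioc 0 T, μ.real {s | u ≤ f s} * ν.real {t | u ≤ g t} := by
  set S : Set (ℝ × (α × β)) := {q | q.1 ≤ f q.2.1 ∧ q.1 ≤ g q.2.2}
  have hS : MeasurableSet S :=
    (measurableSet_le measurable_fst (hf.comp measurable_snd.fst)).inter
      (measurableSet_le measurable_fst (hg.comp measurable_snd.snd))
  have hint : Integrable (S.indicator (1 : ℝ × (α × β) → ℝ))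
      ((volume.restrict (Ioc 0 T)).prod (μ.prod ν)) :=
    (integrable_const 1).indicator hS
  calc ∫ p, min (f p.1) (g p.2) ∂(μ.prod ν)
      = ∫ p, (∫ u in Ioc 0 T, S.indicator (1 : ℝ × (α × β) → ℝ) (u, p)) ∂(μ.prod ν) := by
        refine integral_congr_ae ?_
        filter_upwards [Measure.quasiMeasurePreserving_fst.ae hfT,
          Measure.quasiMeasurePreserving_snd.ae hgT] with p hp₁ hp₂
        rw [min_eq_setIntegral_indicator_Iic hp₁.1 hp₂.1 hp₁.2]
        congr with u
        simp [S, indicator_apply]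
    _ = ∫ u in Ioc 0 T, ∫ p, S.indicator (1 : ℝ × (α × β) → ℝ) (u, p) ∂(μ.prod ν) :=
        (integral_integral_swap (f := fun u p => S.indicator (1 : ℝ × (α × β) → ℝ) (u, p))
          hint).symm
    _ = ∫ u in Ioc 0 T, μ.real {s | u ≤ f s} * ν.real {t | u ≤ g t} := by
        congr with u
        rw [← measureReal_prod_prod, ← integral_indicator_one
          ((measurableSet_le measurable_const hf).prod (measurableSet_le measurable_const hg))]
        rfl

end LayerCake

namespace MeasureTheory

variable {α : Type*} [MeasurableSpace α] {ρ : Measure α} {ι : Type*} [Fintype ι]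

lemma MemLp.linearIndependent_toLp {𝕜 E : Type*} [NormedField 𝕜] [NormedAddCommGroup E]
    [NormedSpace 𝕜 E] {p : ℝ≥0∞} [Fact (1 ≤ p)] {φ : ι → α → E} (hφ : ∀ i, MemLp (φ i) p ρ)
    (h : ∀ c : ι → 𝕜, (fun x => ∑ i, c i • φ i x) =ᵐ[ρ] 0 → c = 0) :
    LinearIndependent 𝕜 (fun i => (hφ i).toLp (φ i)) := by
  rw [Fintype.linearIndependent_iff]
  intro c hc
  refine congrFun (h c ?_)
  have hsum := Lp.coeFn_fun_finsetSum Finset.univ fun i => c i • (hφ i).toLp (φ i)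
  rw [hc] at hsum
  filter_upwards [hsum, Lp.coeFn_zero E p ρ,
    ae_all_iff.2 fun i => Lp.coeFn_smul (c i) ((hφ i).toLp (φ i)),
    ae_all_iff.2 fun i => (hφ i).coeFn_toLp] with x hsum hzero hsmul htoLp
  simp_all

end MeasureTheory

theorem Matrix.posDef_of_ae_linearIndependent {α ι : Type*} [MeasurableSpace α] {ρ : Measure α}
    [Fintype ι] {φ : ι → α → ℝ} (hφ : ∀ i, MemLp (φ i) 2 ρ)
    (h : ∀ c : ι → ℝ, (fun x => ∑ i, c i * φ i x) =ᵐ[ρ] 0 → c = 0) :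
    (Matrix.of fun i j => ∫ x, φ i x * φ j x ∂ρ).PosDef := by
  have hgram : (Matrix.of fun i j => ∫ x, φ i x * φ j x ∂ρ) =
      Matrix.gram ℝ (fun i => (hφ i).toLp (φ i)) := by
    ext i j
    rw [Matrix.gram_apply, L2.inner_def, Matrix.of_apply]
    refine integral_congr_ae ?_
    filter_upwards [(hφ i).coeFn_toLp, (hφ j).coeFn_toLp] with x hi hj
    simp [hi, hj, mul_comm]
  rw [hgram]
  exact Matrix.posDef_gram_of_linearIndependent (MemLp.linearIndependent_toLp hφ h)

-- Only the last nonzero coefficient `c i₀` contributes on `(i₀, i₀ + v]`, where it cannot vanish.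
theorem eq_zero_of_sum_mul_translate_ae_eq_zero {F : ℝ → ℝ} (hF₁ : ∀ u, 1 < u → F u = 0)
    (hF₀ : ∀ᶠ u in 𝓝[>] 0, F u ≠ 0) {n : ℕ} (c : Fin n → ℝ)
    (hc : (fun u : ℝ => ∑ i, c i * F (u - (i : ℕ))) =ᵐ[volume.restrict (Ioc (0 : ℝ) n)] 0) :
    c = 0 := by
  by_contra hne
  obtain ⟨v, hv₀, hv⟩ := mem_nhdsGT_iff_exists_Ioc_subset.1 (hF₀.and (Ioc_mem_nhdsGT one_pos))
  have hv₁ : v ≤ 1 := (hv ⟨hv₀, le_rfl⟩).2.2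
  have hsupp : (Finset.univ.filter fun i => c i ≠ 0).Nonempty := by
    obtain ⟨i, hi⟩ := Function.ne_iff.1 hne
    exact ⟨i, by simpa using hi⟩
  set i₀ := (Finset.univ.filter fun i => c i ≠ 0).max' hsupp
  have hci₀ : c i₀ ≠ 0 := (Finset.mem_filter.1 (Finset.max'_mem _ hsupp)).2
  have hmax : ∀ j, i₀ < j → c j = 0 := fun j hj => by
    by_contra hcj
    exact (Finset.le_max' _ j (by simpa using hcj)).not_gt hj
  have hsum : ∀ u ∈ Ioc ((i₀ : ℕ) : ℝ) ((i₀ : ℕ) + v),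
      ∑ i, c i * F (u - (i : ℕ)) = c i₀ * F (u - (i₀ : ℕ)) := by
    intro u hu
    refine Finset.sum_eq_single i₀ (fun j _ hj => ?_) (by simp)
    rcases lt_or_gt_of_ne hj with hlt | hgt
    · have : ((j : ℕ) : ℝ) + 1 ≤ (i₀ : ℕ) := by exact_mod_cast hlt
      rw [hF₁ _ (by linarith [hu.1]), mul_zero]
    · rw [hmax j hgt, zero_mul]
  have hsub : Ioc ((i₀ : ℕ) : ℝ) ((i₀ : ℕ) + v) ⊆ Ioc 0 n := by
    have : ((i₀ : ℕ) : ℝ) + 1 ≤ n := by exact_mod_cast i₀.isLt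
    exact Ioc_subset_Ioc (Nat.cast_nonneg _) (by linarith)
  have hfalse : ∀ᵐ u ∂volume.restrict (Ioc ((i₀ : ℕ) : ℝ) ((i₀ : ℕ) + v)), False := by
    filter_upwards [ae_restrict_of_ae_restrict_of_subset hsub hc,
      ae_restrict_mem measurableSet_Ioc] with u hu hmem
    rw [Pi.zero_apply, hsum u hmem] at hu
    exact mul_ne_zero hci₀ (hv ⟨by linarith [hmem.1], by linarith [hmem.2]⟩).1 hu
  rw [eventually_false_iff_eq_bot, ae_restrict_eq_bot, Real.volume_Ioc,
    ENNReal.ofReal_eq_zero] at hfalse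
  linarith [show (0 : ℝ) < v from hv₀]

lemma eventually_measure_Ici_ne_zero {μ : Measure ℝ} (h : μ (Ioi 0) ≠ 0) :
    ∀ᶠ u in 𝓝[>] 0, μ (Ici u) ≠ 0 := by
  obtain ⟨k, hk⟩ : ∃ k : ℕ, μ (Ici (1 / (k + 1))) ≠ 0 := by
    by_contra! hzero
    refine h (measure_mono_null (fun s hs => ?_) (measure_iUnion_null hzero))
    obtain ⟨k, hk⟩ := exists_nat_one_div_lt (mem_Ioi.1 hs)
    exact mem_iUnion.2 ⟨k, hk.le⟩
  filter_upwards [Ioc_mem_nhdsGT Nat.one_div_pos_of_nat] with u hu h0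
  exact hk (measure_mono_null (Ici_subset_Ici.2 hu.2) h0)

theorem posDef_setIntegral_measureReal_Ici_mul {μ : Measure ℝ} [IsFiniteMeasure μ]
    (h₁ : μ (Ioi 1) = 0) (h₀ : μ (Ioi 0) ≠ 0) (n : ℕ) :
    (Matrix.of fun i j : Fin n => ∫ u in Ioc (0 : ℝ) n,
      μ.real (Ici (u - (i : ℕ))) * μ.real (Ici (u - (j : ℕ)))).PosDef := by
  set F : ℝ → ℝ := fun w => μ.real (Ici w)
  have hF_anti : Antitone F := fun a b hab => measureReal_mono (Ici_subset_Ici.2 hab)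
  have hF_memLp (i : Fin n) :
      MemLp (fun u => F (u - (i : ℕ))) 2 (volume.restrict (Ioc 0 n)) := by
    refine MemLp.of_bound (hF_anti.measurable.comp (measurable_sub_const _)).aestronglyMeasurable
      (μ.real univ) (Eventually.of_forall fun u => ?_)
    rw [Real.norm_of_nonneg measureReal_nonneg]
    exact measureReal_mono (subset_univ _)
  have hF₁ (u : ℝ) (hu : 1 < u) : F u = 0 :=
    (measureReal_eq_zero_iff (measure_ne_top μ _)).2
      (measure_mono_null (Ici_subset_Ioi.2 hu) h₁)
  have hF₀ : ∀ᶠ u in 𝓝[>] 0, F u ≠ 0 :=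
    (eventually_measure_Ici_ne_zero h₀).mono
      fun u hu => (measureReal_ne_zero_iff (measure_ne_top μ _)).2 hu
  exact Matrix.posDef_of_ae_linearIndependent hF_memLp fun c hc =>
    eq_zero_of_sum_mul_translate_ae_eq_zero hF₁ hF₀ c hc

/-- for `n ≥ 1`, a probability measure `μ` on `[0,1]` with `μ((0,1)) > 0`, a
standard Brownian motion `B` and the local means `G'_i = ∫₀¹ B_{(s+i)/n} dμ(s)`,
`i = 0, …, n−1`, the covariance matrix `(E[G'_i G'_j])_{i,j}`, whose entries equal
`(1/n) ∫₀¹ ∫₀¹ min(s+i, t+j) dμ(s) dμ(t)`, is positive definite, hence invertible. -/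
theorem covariance_matrix_of_local_means_posDef
    {Ω : Type*} [MeasurableSpace Ω] (P : Measure Ω) [IsProbabilityMeasure P]
    (n : ℕ) (hn : 1 ≤ n)
    (μ : Measure ℝ) [IsProbabilityMeasure μ] (hμsupp : μ (Set.Icc (0 : ℝ) 1)ᶜ = 0)
    (hμ : 0 < μ (Set.Ioo (0 : ℝ) 1))
    (B : ℝ → Ω → ℝ) (hB : IsBrownianMotion P B)
    (G' : Fin n → Ω → ℝ)
    (hG' : ∀ (i : Fin n) ω, G' i ω = ∫ s, B ((s + (i : ℕ)) / n) ω ∂μ)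
    (Cov : Matrix (Fin n) (Fin n) ℝ)
    (hCov : ∀ i j, Cov i j = ∫ ω, G' i ω * G' j ω ∂P) :
    (∀ i j : Fin n, Cov i j
        = (1 / n) * ∫ t, (∫ s, min (s + (i : ℕ)) (t + (j : ℕ)) ∂μ) ∂μ) ∧
    Cov.PosDef ∧ IsUnit Cov.det := by
  have hn₀ : (0 : ℝ) < n := Nat.cast_pos.2 hn
  have hmeas (c : ℝ) : Measurable fun s : ℝ => s + c := measurable_add_const c
  have hshift (i : Fin n) : ∀ᵐ (s : ℝ) ∂μ, s + (i : ℕ) ∈ Icc (0 : ℝ) n := by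
    have hi : ((i : ℕ) : ℝ) + 1 ≤ n := by exact_mod_cast i.isLt
    filter_upwards [ae_iff.2 hμsupp] with s hs
    exact ⟨add_nonneg hs.1 (Nat.cast_nonneg _), by linarith [hs.2]⟩
  have hprod (i j : Fin n) :
      Cov i j = (1 / n) * ∫ p, min (p.1 + (i : ℕ)) (p.2 + (j : ℕ)) ∂(μ.prod μ) := by
    have hscaled (i : Fin n) : ∀ᵐ (s : ℝ) ∂μ, (s + (i : ℕ)) / n ∈ Icc (0 : ℝ) 1 :=
      (hshift i).mono fun s hs => ⟨div_nonneg hs.1 hn₀.le, (div_le_one hn₀).2 hs.2⟩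
    simp only [hCov, hG']
    rw [hB.integral_mul_integral ((hmeas _).div_const _) ((hmeas _).div_const _) (hscaled i)
      (hscaled j)]
    simp_rw [min_div_div_right hn₀.le]
    rw [integral_div, one_div_mul_eq_div]
  have hPD : Cov.PosDef := by
    have hCov_eq : Cov = (1 / n : ℝ) • Matrix.of fun i j : Fin n => ∫ u in Ioc (0 : ℝ) n,
        μ.real (Ici (u - (i : ℕ))) * μ.real (Ici (u - (j : ℕ))) := by
      ext i j
      rw [hprod, integral_min_prod_eq_setIntegral (hmeas _) (hmeas _) (hshift i) (hshift j)]
      simp_rw [← sub_le_iff_le_add]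
      rfl
    have h₁ : μ (Ioi 1) = 0 := measure_mono_null (t := (Icc (0 : ℝ) 1)ᶜ)
      (fun s hs hmem => (mem_Ioi.1 hs).not_ge hmem.2) hμsupp
    have h₀ : μ (Ioi 0) ≠ 0 := (hμ.trans_le (measure_mono Ioo_subset_Ioi_self)).ne'
    rw [hCov_eq]
    exact (posDef_setIntegral_measureReal_Ici_mul h₁ h₀ n).smul (by positivity)
  refine ⟨fun i j => ?_, hPD, hPD.det_pos.ne'.isUnit⟩
  rw [hprod, integral_min_prod_eq_integral_integral (hmeas _) (hmeas _) (hshift i) (hshift j)]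
end
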